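/- arXiv:1806.02946 — 5 statements merged into one kernel-verified Lean document; each statement's English description precedes it below -/
import Mathlib

section
/- Let α ∈ ℝ. Assume there exist sequences of rationals (p_n/q_n) and (p′_n/q′_n) with q_n, q′_n ≥ 1, and sequences of reals (θ_n), (δ_n), (τ_n) with θ_n ≥ 1, δ_n > 0, τ_n > 0, and positive constants C, c₁, c₂, c₃, c₄, c₅ such that for all n: (a) q′_n ≤ C·q_n^{θ_n}; (b) c₁·q_n^{−1−δ_n} ≤ |α − p_n/q_n| ≤ c₂·q_n^{−1−δ_n} and c₃·(q′_n)^{−1−τ_n} ≤ |α − p′_n/q′_n| ≤ c₄·(q′_n)^{−1−τ_n}; (c) (q′_n)^{τ_n} ≥ c₅·q_{n+1}^{δ_{n+1}}, and q_n^{δ_n} → ∞ as n → ∞. Then μ(α) ≤ limsup_{n→∞} max{1 + θ_n/δ_n, (1 + τ_n)·θ_n/δ_n}. -/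
/-!
Let `m` exceed the limsup and fix `s` strictly between them. For a rational `x` with large
denominator `b`, choose `n` with `q_n^{δ_n} ≤ K b < q_{n+1}^{δ_{n+1}}`; by (c) this forces
`q'_n^{τ_n} ≥ 2 c₄ b`. If `x ≠ p'_n/q'_n`, then `x` is `1/(b q'_n)`-separated from `p'_n/q'_n`
while `α` lies within half that distance of it, so `|α - x| ≥ 1/(2 b q'_n)`, and
`q'_n ≤ C q_n^{θ_n} ≤ C (K b)^{θ_n/δ_n}`. If `x = p'_n/q'_n`, the lower bound in (b) gives
`|α - x| ≥ c₃ q'_n^{-1-τ_n}`, and `q'_n^{1+τ_n} ≲ (K b)^{(1+τ_n)θ_n/δ_n}`. Both cases give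
`|α - x| ≥ b^{-m}` for large `b`, so only finitely many `x` approximate `α` to order `m`.

The constant `C^{1+τ_n}` in the second case is absorbed by a small power of `q_n`, which is
possible because `q_n → ∞`: the fractions `p_n/q_n` tend to `α` without ever equalling it.
-/

open Polynomial Filter

/-- The irrationality exponent of a real number `ξ`: the supremum (in `EReal`) of all real `m`
such that `|ξ - p/q| < q^{-m}` holds for infinitely many rationals `p/q` (`q ≥ 1`). -/
noncomputable def irrationalityExponent (ξ : ℝ) : EReal :=
  sSup {μ : EReal | ∃ m : ℝ, μ = (m : EReal) ∧
    {x : ℚ | |ξ - (x : ℝ)| < (x.den : ℝ) ^ (-m)}.Infinite}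

open Topology

lemma finite_setOf_den_le_abs_sub_le (α r : ℝ) (B : ℕ) :
    {x : ℚ | x.den ≤ B ∧ |α - x| ≤ r}.Finite := by
  set N : ℤ := ⌈(|α| + r) * B⌉
  have hinj : Function.Injective fun x : ℚ => (x.num, x.den) :=
    fun a b h => Rat.ext (congrArg Prod.fst h) (congrArg Prod.snd h)
  refine (((Set.finite_Icc (-N) N).prod (Set.finite_Iic B)).preimage hinj.injOn).subset ?_
  rintro x ⟨hden, hclose⟩
  refine ⟨abs_le.mp ?_, hden⟩
  have hx : |(x : ℝ)| ≤ |α| + r := by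
    have := abs_sub_abs_le_abs_sub (x : ℝ) α
    rw [abs_sub_comm] at this
    linarith
  have hnum : (x.num : ℝ) = x * x.den := by exact_mod_cast (Rat.mul_den_eq_num x).symm
  have : (|x.num| : ℝ) ≤ (|α| + r) * B := by
    rw [hnum, abs_mul, Nat.abs_cast]
    exact mul_le_mul hx (by exact_mod_cast hden) (by positivity) ((abs_nonneg _).trans hx)
  exact_mod_cast this.trans (Int.le_ceil _)

lemma one_div_den_mul_le_abs_sub_div (x : ℚ) {P Q : ℤ} (hQ : 0 < Q)
    (hne : (x : ℝ) ≠ P / Q) : 1 / (x.den * Q : ℝ) ≤ |(x : ℝ) - P / Q| := by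
  have hnum : (x.num : ℝ) = x * x.den := by exact_mod_cast (Rat.mul_den_eq_num x).symm
  have hcross : ((x.num * Q - x.den * P : ℤ) : ℝ) = ((x : ℝ) - P / Q) * (x.den * Q) := by
    push_cast
    rw [hnum]
    field_simp
  have hD : x.num * Q - x.den * P ≠ 0 := by
    intro h
    rw [h, Int.cast_zero, eq_comm, mul_eq_zero, sub_eq_zero] at hcross
    exact hcross.elim hne (by positivity)
  rw [div_le_iff₀ (by positivity), ← abs_of_pos (by positivity : (0 : ℝ) < x.den * Q), ← abs_mul,
    ← hcross]
  exact_mod_cast Int.one_le_abs hD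

lemma one_div_two_mul_le_abs_sub_of_ne {α : ℝ} (x : ℚ) {P Q : ℤ} (hQ : 0 < Q)
    (hne : (x : ℝ) ≠ P / Q) (hclose : |α - P / Q| ≤ 1 / (2 * (x.den * Q))) :
    1 / (2 * (x.den * Q)) ≤ |α - x| := by
  have hsep := one_div_den_mul_le_abs_sub_div x hQ hne
  have htri : |(x : ℝ) - P / Q| ≤ |α - x| + |α - P / Q| := by
    rw [abs_sub_comm α]; exact abs_sub_le _ _ _
  have hhalf : 1 / (x.den * Q : ℝ) = 1 / (2 * (x.den * Q)) + 1 / (2 * (x.den * Q)) := by ring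
  linarith

lemma tendsto_den_atTop_of_tendsto {ι : Type*} {l : Filter ι} {x : ι → ℚ} {α : ℝ}
    (hx : Tendsto (fun i => (x i : ℝ)) l (𝓝 α)) (hne : ∀ i, (x i : ℝ) ≠ α) :
    Tendsto (fun i => (x i).den) l atTop := by
  refine tendsto_atTop.2 fun M => ?_
  have hfin := finite_setOf_den_le_abs_sub_le α 1 M
  have hclose : ∀ᶠ i in l, |α - x i| ≤ 1 := (Metric.tendsto_nhds.1 hx 1 one_pos).mono
    fun i hi => by rw [Real.dist_eq, abs_sub_comm] at hi; exact hi.le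
  have hfar : ∀ᶠ i in l, ∀ y ∈ {x : ℚ | x.den ≤ M ∧ |α - x| ≤ 1}, x i ≠ y := by
    refine hfin.eventually_all.2 fun y _ => ?_
    by_cases hy : (y : ℝ) = α
    · exact Eventually.of_forall fun i h => hne i (by rw [h, hy])
    · exact (hx.eventually_ne (Ne.symm hy)).mono fun i h h' => h (by rw [h'])
  filter_upwards [hclose, hfar] with i hi hfar
  by_contra! h
  exact hfar (x i) ⟨h.le, hi⟩ rfl

lemma exists_le_lt_succ_of_tendsto_atTop {β : Type*} [LinearOrder β] [NoMaxOrder β]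
    {f : ℕ → β} (hf : Tendsto f atTop atTop) {N : ℕ} {y : β} (hy : f N ≤ y) :
    ∃ n ≥ N, f n ≤ y ∧ y < f (n + 1) := by
  by_contra! h
  have hle : ∀ n ≥ N, f n ≤ y := fun n hn =>
    Nat.le_induction hy (fun k hk ih => h k hk ih) n hn
  obtain ⟨n, hn⟩ := ((hf.eventually_gt_atTop y).and (eventually_ge_atTop N)).exists
  exact absurd (hle n hn.2) (not_le.2 hn.1)

lemma rpow_le_rpow_of_rpow_le_of_le_mul {q X δ e k : ℝ} (hq : 0 ≤ q) (hδ : 0 < δ) (he : 0 ≤ e)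
    (hX : 1 ≤ X) (hqX : q ^ δ ≤ X) (hk : e ≤ k * δ) : q ^ e ≤ X ^ k :=
  calc q ^ e = (q ^ δ) ^ (e / δ) := by rw [← Real.rpow_mul hq, mul_div_cancel₀ _ hδ.ne']
    _ ≤ X ^ (e / δ) := Real.rpow_le_rpow (by positivity) hqX (by positivity)
    _ ≤ X ^ k := Real.rpow_le_rpow_of_exponent_le hX ((div_le_iff₀ hδ).2 hk)

lemma rpow_one_add_le_of_le_mul_rpow {q q' θ δ τ C ε s X : ℝ} (hq : 1 ≤ q) (hq' : 0 ≤ q')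
    (hθ : 1 ≤ θ) (hδ : 0 < δ) (hτ : 0 ≤ τ) (hε : 0 ≤ ε) (hCq : C ≤ q ^ ε)
    (ha : q' ≤ C * q ^ θ) (hs : (1 + τ) * θ / δ < s) (hX : 1 ≤ X) (hqX : q ^ δ ≤ X) :
    q' ^ (1 + τ) ≤ X ^ (s * (1 + ε)) := by
  have hq'q : q' ≤ q ^ (θ + ε) := by
    rw [Real.rpow_add (by linarith), mul_comm]
    exact ha.trans (mul_le_mul_of_nonneg_right hCq (by positivity))
  have hexp : (θ + ε) * (1 + τ) ≤ s * (1 + ε) * δ := by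
    have h1 : (1 + τ) * θ < s * δ := (div_lt_iff₀ hδ).1 hs
    have h2 : ε * (1 + τ) ≤ ε * ((1 + τ) * θ) :=
      mul_le_mul_of_nonneg_left (le_mul_of_one_le_right (by linarith) hθ) hε
    nlinarith [mul_le_mul_of_nonneg_left h1.le hε]
  calc q' ^ (1 + τ) ≤ (q ^ (θ + ε)) ^ (1 + τ) := Real.rpow_le_rpow hq' hq'q (by linarith)
    _ = q ^ ((θ + ε) * (1 + τ)) := (Real.rpow_mul (by linarith) _ _).symm
    _ ≤ X ^ (s * (1 + ε)) :=
      rpow_le_rpow_of_rpow_le_of_le_mul (by linarith) hδ (by positivity) hX hqX hexp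

lemma min_mul_rpow_neg_le_abs_sub {α q θ δ τ C c₃ c₄ ε s X : ℝ} {P Q : ℤ} (x : ℚ)
    (hq : 1 ≤ q) (hQ : 1 ≤ Q) (hθ : 1 ≤ θ) (hδ : 0 < δ) (hτ : 0 ≤ τ) (hε : 0 ≤ ε)
    (hC : 0 < C) (hc₃ : 0 < c₃) (hc₄ : 0 < c₄) (hCq : C ≤ q ^ ε) (ha : (Q : ℝ) ≤ C * q ^ θ)
    (hb₃ : c₃ * (Q : ℝ) ^ (-(1 + τ)) ≤ |α - P / Q|)
    (hb₄ : |α - P / Q| ≤ c₄ * (Q : ℝ) ^ (-(1 + τ)))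
    (hs : max (1 + θ / δ) ((1 + τ) * θ / δ) < s) (hqX : q ^ δ ≤ X) (hbX : (x.den : ℝ) ≤ X)
    (hQτ : 2 * c₄ * x.den ≤ (Q : ℝ) ^ τ) :
    min (1 / (2 * C)) c₃ * X ^ (-(s * (1 + ε))) ≤ |α - x| := by
  have hQ0 : (0 : ℝ) < Q := by exact_mod_cast hQ
  have hX : 1 ≤ X := le_trans (by exact_mod_cast x.pos) hbX
  have hs₁ : 1 + θ / δ < s := (le_max_left _ _).trans_lt hs
  have hs₂ : (1 + τ) * θ / δ < s := (le_max_right _ _).trans_lt hs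
  by_cases hx : (x : ℝ) = P / Q
  · calc min (1 / (2 * C)) c₃ * X ^ (-(s * (1 + ε)))
        ≤ c₃ * X ^ (-(s * (1 + ε))) := mul_le_mul_of_nonneg_right (min_le_right _ _) (by positivity)
      _ ≤ c₃ * (Q : ℝ) ^ (-(1 + τ)) := by
          refine mul_le_mul_of_nonneg_left ?_ hc₃.le
          rw [Real.rpow_neg hQ0.le, Real.rpow_neg (by linarith)]
          exact inv_anti₀ (by positivity) (rpow_one_add_le_of_le_mul_rpow hq hQ0.le hθ hδ hτ hε
            hCq ha hs₂ hX hqX)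
      _ ≤ |α - x| := hx ▸ hb₃
  · have hclose : |α - P / Q| ≤ 1 / (2 * (x.den * Q)) :=
      calc |α - P / Q| ≤ c₄ * (Q : ℝ) ^ (-(1 + τ)) := hb₄
        _ = c₄ / (Q * (Q : ℝ) ^ τ) := by
          rw [Real.rpow_neg hQ0.le, Real.rpow_add hQ0, Real.rpow_one, div_eq_mul_inv]
        _ ≤ c₄ / (Q * (2 * c₄ * x.den)) := by gcongr
        _ = 1 / (2 * (x.den * Q)) := by field_simp
    have hQX : (Q : ℝ) ≤ C * X ^ (s - 1) := ha.trans <| mul_le_mul_of_nonneg_left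
      (rpow_le_rpow_of_rpow_le_of_le_mul (by linarith) hδ (by linarith) hX hqX
        (by have := (div_lt_iff₀ hδ).1 (lt_sub_iff_add_lt'.2 hs₁); linarith)) hC.le
    have hbQ : (x.den * Q : ℝ) ≤ C * X ^ s := by
      calc (x.den * Q : ℝ) ≤ X * (C * X ^ (s - 1)) := mul_le_mul hbX hQX hQ0.le (by linarith)
        _ = C * X ^ s := by rw [Real.rpow_sub_one (by positivity)]; field_simp
    have hs0 : 0 ≤ s := by linarith [div_nonneg (by linarith : (0 : ℝ) ≤ θ) hδ.le]
    calc min (1 / (2 * C)) c₃ * X ^ (-(s * (1 + ε)))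
        ≤ 1 / (2 * C) * X ^ (-s) := mul_le_mul (min_le_left _ _)
          (Real.rpow_le_rpow_of_exponent_le hX (by nlinarith)) (by positivity) (by positivity)
      _ = 1 / (2 * (C * X ^ s)) := by rw [Real.rpow_neg (by linarith)]; field_simp
      _ ≤ 1 / (2 * (x.den * Q)) := one_div_le_one_div_of_le (by positivity) (by linarith)
      _ ≤ |α - x| := one_div_two_mul_le_abs_sub_of_ne x (by omega) hx hclose

lemma eventually_rpow_neg_le_mul_rpow_neg {c r m : ℝ} (hc : 0 < c) (hrm : r < m) :
    ∀ᶠ b : ℝ in atTop, b ^ (-m) ≤ c * b ^ (-r) := by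
  filter_upwards [(tendsto_rpow_atTop (sub_pos.2 hrm)).eventually_ge_atTop c⁻¹,
    eventually_gt_atTop 0] with b hb hb0
  have hsplit : b ^ (-m) = (b ^ (m - r))⁻¹ * b ^ (-r) := by
    rw [← Real.rpow_neg hb0.le, ← Real.rpow_add hb0]; ring_nf
  rw [hsplit]
  exact mul_le_mul_of_nonneg_right (inv_le_of_inv_le₀ hc hb) (by positivity)

lemma tendsto_atTop_of_abs_sub_div_le {α c₂ : ℝ} {p q : ℕ → ℤ} {δ : ℕ → ℝ}
    (hq : ∀ n, 1 ≤ q n) (hc₂ : 0 ≤ c₂) (hne : ∀ n, α ≠ p n / q n)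
    (hb₂ : ∀ n, |α - (p n : ℝ) / (q n : ℝ)| ≤ c₂ * (q n : ℝ) ^ (-(1 + δ n)))
    (htend : Tendsto (fun n => (q n : ℝ) ^ (δ n)) atTop atTop) :
    Tendsto (fun n => (q n : ℝ)) atTop atTop := by
  set x : ℕ → ℚ := fun n => p n / q n
  have hx : ∀ n, (x n : ℝ) = p n / q n := fun n => by push_cast [x]; rfl
  have hden : ∀ n, ((x n).den : ℝ) ≤ q n := fun n => by
    have hdvd := Rat.den_dvd (p n) (q n)
    rw [Rat.divInt_eq_div] at hdvd
    have hle : (((x n).den : ℤ) : ℝ) ≤ q n :=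
      Int.cast_le.2 (Int.le_of_dvd (by linarith [hq n]) hdvd)
    rwa [Int.cast_natCast] at hle
  have hconv : Tendsto (fun n => (x n : ℝ)) atTop (𝓝 α) := by
    rw [tendsto_iff_dist_tendsto_zero]
    refine squeeze_zero (fun n => dist_nonneg) (fun n => ?_)
      (by simpa using (tendsto_inv_atTop_zero.comp htend).const_mul c₂)
    have hq1 : (1 : ℝ) ≤ q n := by exact_mod_cast hq n
    calc dist (x n : ℝ) α = |α - p n / q n| := by rw [Real.dist_eq, abs_sub_comm, hx]
      _ ≤ c₂ * (q n : ℝ) ^ (-(1 + δ n)) := hb₂ n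
      _ ≤ c₂ * ((q n : ℝ) ^ δ n)⁻¹ := by
        rw [← Real.rpow_neg (by linarith)]
        exact mul_le_mul_of_nonneg_left
          (Real.rpow_le_rpow_of_exponent_le hq1 (by linarith)) hc₂
  refine tendsto_atTop_mono hden (tendsto_natCast_atTop_atTop.comp
    (tendsto_den_atTop_of_tendsto hconv fun n => ?_))
  rw [hx]; exact (hne n).symm

lemma finite_setOf_abs_sub_lt_rpow {α C c₃ c₄ c₅ s m : ℝ} {p' q q' : ℕ → ℤ} {θ δ τ : ℕ → ℝ}
    (hq : ∀ n, 1 ≤ q n) (hq' : ∀ n, 1 ≤ q' n) (hθ : ∀ n, 1 ≤ θ n) (hδ : ∀ n, 0 < δ n)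
    (hτ : ∀ n, 0 ≤ τ n) (hC : 0 < C) (hc₃ : 0 < c₃) (hc₄ : 0 < c₄) (hc₅ : 0 < c₅)
    (ha : ∀ n, (q' n : ℝ) ≤ C * (q n : ℝ) ^ (θ n))
    (hb₃ : ∀ n, c₃ * (q' n : ℝ) ^ (-(1 + τ n)) ≤ |α - (p' n : ℝ) / (q' n : ℝ)|)
    (hb₄ : ∀ n, |α - (p' n : ℝ) / (q' n : ℝ)| ≤ c₄ * (q' n : ℝ) ^ (-(1 + τ n)))
    (hc₅' : ∀ n, c₅ * (q (n + 1) : ℝ) ^ (δ (n + 1)) ≤ (q' n : ℝ) ^ (τ n))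
    (hqtend : Tendsto (fun n => (q n : ℝ)) atTop atTop)
    (htend : Tendsto (fun n => (q n : ℝ) ^ (δ n)) atTop atTop)
    (hs : ∀ᶠ n in atTop, max (1 + θ n / δ n) ((1 + τ n) * θ n / δ n) < s) (hsm : s < m) :
    {x : ℚ | |α - x| < (x.den : ℝ) ^ (-m)}.Finite := by
  obtain ⟨n₀, hn₀⟩ := hs.exists
  have hs₁ : 1 < s := (lt_add_of_pos_right 1 (div_pos (by linarith [hθ n₀]) (hδ n₀))).trans_le
    (le_max_left _ _) |>.trans hn₀
  set ε := (m - s) / (2 * s)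
  have hε : 0 < ε := div_pos (by linarith) (by linarith)
  have hεm : s * (1 + ε) < m := by
    have : s * (1 + ε) = (s + m) / 2 := by simp only [ε]; field_simp; ring
    linarith
  obtain ⟨N, hN⟩ := eventually_atTop.1
    (hs.and (((tendsto_rpow_atTop hε).comp hqtend).eventually_ge_atTop C))
  set K := max 1 (2 * c₄ / c₅)
  have hK : 1 ≤ K := le_max_left _ _
  have hlower : ∀ x : ℚ, (q N : ℝ) ^ δ N ≤ x.den →
      min (1 / (2 * C)) c₃ * (K * x.den) ^ (-(s * (1 + ε))) ≤ |α - x| := by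
    intro x hx
    have hbK : (x.den : ℝ) ≤ K * x.den := le_mul_of_one_le_left (by positivity) hK
    obtain ⟨n, hnN, hnX, hXn⟩ := exists_le_lt_succ_of_tendsto_atTop htend (hx.trans hbK)
    obtain ⟨hsn, hCn⟩ := hN n hnN
    refine min_mul_rpow_neg_le_abs_sub (q := q n) x (by exact_mod_cast hq n) (hq' n) (hθ n)
      (hδ n) (hτ n) hε.le hC hc₃ hc₄ hCn (ha n) (hb₃ n) (hb₄ n) hsn hnX hbK ?_
    calc 2 * c₄ * x.den = c₅ * (2 * c₄ / c₅ * x.den) := by field_simp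
      _ ≤ c₅ * (K * x.den) := by gcongr; exact le_max_right _ _
      _ ≤ (q' n : ℝ) ^ τ n := by nlinarith [hc₅' n]
  obtain ⟨B, hB⟩ := eventually_atTop.1 ((eventually_ge_atTop ((q N : ℝ) ^ δ N)).and
    (eventually_rpow_neg_le_mul_rpow_neg (c := min (1 / (2 * C)) c₃ * K ^ (-(s * (1 + ε))))
      (by positivity) hεm))
  refine (finite_setOf_den_le_abs_sub_le α 1 ⌈B⌉₊).subset fun x hx => ⟨?_, ?_⟩
  · by_contra! hden
    have hBx : B ≤ x.den := (Nat.le_ceil B).trans (by exact_mod_cast hden.le)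
    obtain ⟨hqx, hmx⟩ := hB _ hBx
    rw [mul_assoc, ← Real.mul_rpow (by positivity) (by positivity)] at hmx
    exact absurd hx (not_lt.2 (hmx.trans (hlower x hqx)))
  · exact hx.le.trans (Real.rpow_le_one_of_one_le_of_nonpos (by exact_mod_cast x.pos)
      (by linarith))

/-- **Proposition 1.** Let `α ∈ ℝ`. Given two sequences of rational approximations `p_n/q_n`,
`p'_n/q'_n` (`q_n, q'_n ≥ 1`) and sequences `θ_n ≥ 1`, `δ_n > 0`, `τ_n > 0` with
(a) `q'_n ≤ C·q_n^{θ_n}`, (b) `|α - p_n/q_n| ≍ q_n^{-1-δ_n}`, `|α - p'_n/q'_n| ≍ (q'_n)^{-1-τ_n}`,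
(c) `(q'_n)^{τ_n} ≥ c₅·q_{n+1}^{δ_{n+1}}` and `q_n^{δ_n} → ∞`, one has
`μ(α) ≤ limsup_n max{1 + θ_n/δ_n, (1 + τ_n)·θ_n/δ_n}`. -/
theorem statement5
    (α : ℝ) (p p' : ℕ → ℤ) (q q' : ℕ → ℤ)
    (hq : ∀ n, 1 ≤ q n) (hq' : ∀ n, 1 ≤ q' n)
    (θ δ τ : ℕ → ℝ)
    (hθ : ∀ n, 1 ≤ θ n) (hδ : ∀ n, 0 < δ n) (hτ : ∀ n, 0 < τ n)
    (C c₁ c₂ c₃ c₄ c₅ : ℝ)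
    (hC : 0 < C) (hc₁ : 0 < c₁) (hc₂ : 0 < c₂) (hc₃ : 0 < c₃) (hc₄ : 0 < c₄) (hc₅ : 0 < c₅)
    (ha : ∀ n, (q' n : ℝ) ≤ C * (q n : ℝ) ^ (θ n))
    (hb₁ : ∀ n, c₁ * (q n : ℝ) ^ (-(1 + δ n)) ≤ |α - (p n : ℝ) / (q n : ℝ)|)
    (hb₂ : ∀ n, |α - (p n : ℝ) / (q n : ℝ)| ≤ c₂ * (q n : ℝ) ^ (-(1 + δ n)))
    (hb₃ : ∀ n, c₃ * (q' n : ℝ) ^ (-(1 + τ n)) ≤ |α - (p' n : ℝ) / (q' n : ℝ)|)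
    (hb₄ : ∀ n, |α - (p' n : ℝ) / (q' n : ℝ)| ≤ c₄ * (q' n : ℝ) ^ (-(1 + τ n)))
    (hc₅' : ∀ n, c₅ * (q (n + 1) : ℝ) ^ (δ (n + 1)) ≤ (q' n : ℝ) ^ (τ n))
    (htend : Filter.Tendsto (fun n => (q n : ℝ) ^ (δ n)) Filter.atTop Filter.atTop) :
    irrationalityExponent α ≤
      Filter.limsup
        (fun n => ((max (1 + θ n / δ n) ((1 + τ n) * θ n / δ n) : ℝ) : EReal))
        Filter.atTop := by
  have hne : ∀ n, α ≠ p n / q n := fun n h => by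
    have hpos : 0 < c₁ * (q n : ℝ) ^ (-(1 + δ n)) :=
      mul_pos hc₁ (Real.rpow_pos_of_pos (by exact_mod_cast hq n) _)
    have := hb₁ n
    rw [h, sub_self, abs_zero] at this
    exact absurd this (not_le.2 hpos)
  have hqtend := tendsto_atTop_of_abs_sub_div_le hq hc₂.le hne hb₂ htend
  refine sSup_le ?_
  rintro _ ⟨m, rfl, hinf⟩
  by_contra! hm
  obtain ⟨s, hLs, hsm⟩ := EReal.lt_iff_exists_real_btwn.1 hm
  have hs := (eventually_lt_of_limsup_lt hLs).mono fun n hn => EReal.coe_lt_coe_iff.1 hn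
  exact hinf (finite_setOf_abs_sub_lt_rpow hq hq' hθ hδ (fun n => (hτ n).le) hC hc₃ hc₄ hc₅ ha
    hb₃ hb₄ hc₅' hqtend htend hs (EReal.coe_lt_coe_iff.1 hsm))
end

section
/- Let α ∈ ℝ. Assume there exist sequences of rationals (p_n/q_n) and (p′_n/q′_n) with q_n, q′_n ≥ 1, and sequences of reals (θ_n), (δ_n), (τ_n) with θ_n ≥ 1, δ_n > 0, τ_n ≥ 1, and positive constants C, c₁, c₂, c₃, c₄, c₅ such that for all n: (a) q′_n ≤ C·q_n^{θ_n}; (b) c₁·q_n^{−1−δ_n} ≤ |α − p_n/q_n| ≤ c₂·q_n^{−1−δ_n} and c₃·(q′_n)^{−1−τ_n} ≤ |α − p′_n/q′_n| ≤ c₄·(q′_n)^{−1−τ_n}; (c) (q′_n)^{τ_n} ≥ c₅·q_{n+1}^{δ_{n+1}} and q_n^{δ_n} → ∞. If moreover θ_n/δ_n → 1 as n → ∞, then μ(α) = limsup_{n→∞} (1 + τ_n). -/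
open Polynomial Filter

private lemma inv_anti' {a b : ℝ} (ha : 0 < a) (h : a ≤ b) : b⁻¹ ≤ a⁻¹ := by
  rw [← one_div, ← one_div]; exact one_div_le_one_div_of_le ha h

/-- Gap between a rational and a fraction of integers. -/
private lemma rat_gap (x : ℚ) (a b : ℤ) (hb : 0 < b) (hne : (x : ℝ) ≠ (a : ℝ) / (b : ℝ)) :
    1 / ((x.den : ℝ) * (b : ℝ)) ≤ |(x : ℝ) - (a : ℝ) / (b : ℝ)| := by
  have hd : (0:ℝ) < (x.den : ℝ) := by exact_mod_cast x.den_pos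
  have hb' : (0:ℝ) < (b : ℝ) := by exact_mod_cast hb
  have key : (x : ℝ) - (a : ℝ) / (b : ℝ)
      = ((x.num * b - a * x.den : ℤ) : ℝ) / ((x.den : ℝ) * (b : ℝ)) := by
    rw [Rat.cast_def]
    push_cast
    field_simp
  have hN : (x.num * b - a * x.den : ℤ) ≠ 0 := by
    intro h0
    apply hne
    have h1 : (x : ℝ) - (a : ℝ) / (b : ℝ) = 0 := by rw [key, h0]; simp
    exact sub_eq_zero.mp h1
  have h1 : (1:ℝ) ≤ |((x.num * b - a * x.den : ℤ) : ℝ)| := by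
    exact_mod_cast Int.one_le_abs hN
  rw [key, abs_div, abs_of_pos (by positivity : (0:ℝ) < (x.den : ℝ) * (b:ℝ))]
  gcongr

private lemma aux_div {u v w c : ℝ} (hu : 0 < u) (hv : 0 < v) (hw : 0 < w) (hc : 0 < c)
    (h : w / c ≤ u / v) : u⁻¹ ≤ c * (w⁻¹ * v⁻¹) := by
  rw [div_le_div_iff₀ hc hv] at h
  -- h : w * v ≤ u * c
  have h2 : u⁻¹ * (w * v) ≤ c := by
    rw [inv_mul_le_iff₀ hu]
    nlinarith
  calc u⁻¹ = u⁻¹ * (w * v) * (w⁻¹ * v⁻¹) := by field_simp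
    _ ≤ c * (w⁻¹ * v⁻¹) := mul_le_mul_of_nonneg_right h2 (by positivity)

/-- Finiteness of the set of good approximations, given a denominator threshold. -/
private lemma finite_of_key (α m Q₀ : ℝ) (hQ₀1 : 1 ≤ Q₀)
    (key : ∀ x : ℚ, Q₀ ≤ (x.den : ℝ) → (x.den : ℝ) ^ (-m) ≤ |α - (x : ℝ)|) :
    {x : ℚ | |α - (x : ℝ)| < (x.den : ℝ) ^ (-m)}.Finite := by
  have hQ₀0 : (0:ℝ) < Q₀ := by linarith
  set B : ℝ := |α| + Q₀ ^ |m| with hB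
  have hB0 : 0 ≤ B := add_nonneg (abs_nonneg _) (Real.rpow_pos_of_pos hQ₀0 _).le
  have hsub : {x : ℚ | |α - (x : ℝ)| < (x.den : ℝ) ^ (-m)} ⊆
      (fun x : ℚ => (x.num, x.den)) ⁻¹'
        (Set.Icc (-⌈B * Q₀⌉) ⌈B * Q₀⌉ ×ˢ Set.Icc 0 ⌈Q₀⌉₊) := by
    intro x hx
    simp only [Set.mem_setOf_eq] at hx
    have hd1 : (1:ℝ) ≤ (x.den : ℝ) := by exact_mod_cast x.den_pos
    have hd0 : (0:ℝ) < (x.den : ℝ) := by linarith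
    have hdlt : (x.den : ℝ) ≤ Q₀ := by
      by_contra hge
      push_neg at hge
      exact absurd hx (not_lt.mpr (key x hge.le))
    have h1 : (x.den : ℝ) ^ (-m) ≤ Q₀ ^ |m| :=
      le_trans (Real.rpow_le_rpow_of_exponent_le hd1 (neg_le_abs m))
        (Real.rpow_le_rpow (by linarith) hdlt (abs_nonneg m))
    have hbound : |(x : ℝ)| ≤ B := by
      have h2 : |(x : ℝ)| - |α| ≤ |(x : ℝ) - α| := abs_sub_abs_le_abs_sub _ _
      rw [abs_sub_comm] at h2
      have h3 := lt_of_lt_of_le hx h1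
      rw [hB]; linarith
    have hnum : |(x.num : ℝ)| ≤ B * Q₀ := by
      have h3 : |(x.num : ℝ)| = |(x : ℝ)| * (x.den : ℝ) := by
        rw [Rat.cast_def, abs_div, abs_of_pos hd0, div_mul_cancel₀ _ hd0.ne']
      rw [h3]
      exact mul_le_mul hbound hdlt hd0.le hB0
    simp only [Set.mem_preimage, Set.mem_prod, Set.mem_Icc]
    refine ⟨?_, Nat.zero_le _, ?_⟩
    · have h4 : (|x.num| : ℝ) ≤ (⌈B * Q₀⌉ : ℝ) := by
        push_cast
        exact le_trans hnum (Int.le_ceil _)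
      have h5 : |x.num| ≤ ⌈B * Q₀⌉ := by exact_mod_cast h4
      exact abs_le.mp h5
    · have h6 : (x.den : ℝ) ≤ (⌈Q₀⌉₊ : ℝ) := le_trans hdlt (Nat.le_ceil _)
      exact_mod_cast h6
  have hfin2 : ((Set.Icc (-⌈B * Q₀⌉) ⌈B * Q₀⌉) ×ˢ (Set.Icc 0 ⌈Q₀⌉₊)).Finite :=
    (Set.finite_Icc _ _).prod (Set.finite_Icc _ _)
  have hinj : Function.Injective (fun x : ℚ => (x.num, x.den)) := by
    intro a b hab
    simp only [Prod.mk.injEq] at hab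
    exact Rat.ext hab.1 hab.2
  exact (hfin2.preimage hinj.injOn).subset hsub

/-- The key pointwise lower bound for the distance of `α` to a rational with large
denominator, under the hypotheses of the theorem. -/
private lemma key_estimate
    (α : ℝ) (p' q q' : ℕ → ℤ)
    (hq : ∀ n, 1 ≤ q n) (hq' : ∀ n, 1 ≤ q' n)
    (θ δ τ : ℕ → ℝ) (hθ : ∀ n, 1 ≤ θ n) (hδ : ∀ n, 0 < δ n)
    (C c₃ c₄ c₅ : ℝ) (hC : 0 < C) (hc₃ : 0 < c₃) (hc₄ : 0 < c₄) (hc₅ : 0 < c₅)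
    (ha : ∀ n, (q' n : ℝ) ≤ C * (q n : ℝ) ^ (θ n))
    (hb₃ : ∀ n, c₃ * (q' n : ℝ) ^ (-(1 + τ n)) ≤ |α - (p' n : ℝ) / (q' n : ℝ)|)
    (hb₄ : ∀ n, |α - (p' n : ℝ) / (q' n : ℝ)| ≤ c₄ * (q' n : ℝ) ^ (-(1 + τ n)))
    (hc₅' : ∀ n, c₅ * (q (n + 1) : ℝ) ^ (δ (n + 1)) ≤ (q' n : ℝ) ^ (τ n))
    (hq'τ : Tendsto (fun n => (q' n : ℝ) ^ (τ n)) atTop atTop)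
    (m ℓ ε : ℝ) (hε0 : 0 < ε) (hℓ0 : 0 ≤ ℓ)
    (N : ℕ) (hN : ∀ n ≥ N, 1 + τ n < ℓ + ε ∧ θ n / δ n < 1 + ε)
    (A K Q₁ : ℝ) (hAdef : A = max (2 * c₄ / c₅) 1) (hKdef : K = C * A ^ ((1:ℝ) + ε))
    (hQ₁ : ∀ s ≥ Q₁, 2 * K ≤ s ^ (m - (2 + ε)) ∧
      K ^ (ℓ + ε) / c₃ ≤ s ^ (m - (1 + ε) * (ℓ + ε)))
    (x : ℚ)
    (hx : max (max Q₁ ((Finset.range (N + 1)).sup' (by simp)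
        (fun k => (q' k : ℝ) ^ (τ k)) / (2 * c₄) + 1)) 1 ≤ (x.den : ℝ)) :
    (x.den : ℝ) ^ (-m) ≤ |α - (x : ℝ)| := by
  have hq1 : ∀ n, (1:ℝ) ≤ (q n : ℝ) := fun n => by exact_mod_cast hq n
  have hq'1 : ∀ n, (1:ℝ) ≤ (q' n : ℝ) := fun n => by exact_mod_cast hq' n
  have hqpos : ∀ n, (0:ℝ) < (q n : ℝ) := fun n => lt_of_lt_of_le one_pos (hq1 n)
  have hq'pos : ∀ n, (0:ℝ) < (q' n : ℝ) := fun n => lt_of_lt_of_le one_pos (hq'1 n)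
  set M : ℝ := (Finset.range (N + 1)).sup' (by simp) (fun k => (q' k : ℝ) ^ (τ k)) with hMdef
  set d : ℝ := (x.den : ℝ) with hddef
  have hd1 : (1:ℝ) ≤ d := le_trans (le_max_right _ _) hx
  have hd0 : (0:ℝ) < d := by linarith
  have hdM : M / (2 * c₄) + 1 ≤ d := le_trans (le_trans (le_max_right _ _) (le_max_left _ _)) hx
  have hdQ₁ : Q₁ ≤ d := le_trans (le_trans (le_max_left _ _) (le_max_left _ _)) hx
  have hA1 : (1:ℝ) ≤ A := hAdef ▸ le_max_right _ _
  have hA0 : (0:ℝ) < A := by linarith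
  have hK0 : 0 < K := hKdef ▸ mul_pos hC (Real.rpow_pos_of_pos hA0 _)
  have hex : ∃ k, 2 * c₄ * d ≤ (q' k : ℝ) ^ (τ k) :=
    (hq'τ.eventually_ge_atTop _).exists
  set n := sInf {k | 2 * c₄ * d ≤ (q' k : ℝ) ^ (τ k)} with hndef
  have hmemn : 2 * c₄ * d ≤ (q' n : ℝ) ^ (τ n) := Nat.sInf_mem hex
  have hmin : ∀ k, k < n → (q' k : ℝ) ^ (τ k) < 2 * c₄ * d := fun k hk =>
    not_le.mp (Nat.notMem_of_lt_sInf hk)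
  have hNn : N < n := by
    by_contra hle
    push_neg at hle
    have h1 : (q' n : ℝ) ^ (τ n) ≤ M :=
      Finset.le_sup' (fun k => (q' k : ℝ) ^ (τ k)) (Finset.mem_range.mpr (by omega))
    have h4 : M ≤ (d - 1) * (2 * c₄) := by
      rw [← div_le_iff₀ (by positivity : (0:ℝ) < 2 * c₄)]
      linarith
    nlinarith
  have hqn : (q n : ℝ) ^ (δ n) ≤ A * d := by
    have h1 := hmin (n - 1) (by omega)
    have h2 := hc₅' (n - 1)
    rw [(by omega : n - 1 + 1 = n)] at h2
    have h3 : c₅ * (q n : ℝ) ^ (δ n) < 2 * c₄ * d := lt_of_le_of_lt h2 h1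
    have h4 : (q n : ℝ) ^ (δ n) ≤ 2 * c₄ / c₅ * d := by
      rw [div_mul_eq_mul_div, le_div_iff₀ hc₅]
      nlinarith
    calc (q n : ℝ) ^ (δ n) ≤ 2 * c₄ / c₅ * d := h4
      _ ≤ A * d := mul_le_mul_of_nonneg_right (hAdef ▸ le_max_left _ _) hd0.le
  have hAd1 : (1:ℝ) ≤ A * d := by nlinarith
  have hq'K : (q' n : ℝ) ≤ K * d ^ ((1:ℝ) + ε) := by
    have h2 : (q n : ℝ) ^ (θ n) = ((q n : ℝ) ^ (δ n)) ^ (θ n / δ n) := by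
      rw [← Real.rpow_mul (hqpos n).le]
      congr 1
      rw [mul_comm, div_mul_cancel₀ _ (hδ n).ne']
    have h3 : ((q n : ℝ) ^ (δ n)) ^ (θ n / δ n) ≤ (A * d) ^ (θ n / δ n) :=
      Real.rpow_le_rpow (Real.rpow_pos_of_pos (hqpos n) _).le hqn
        (div_nonneg (by linarith [hθ n]) (hδ n).le)
    have h4 : (A * d) ^ (θ n / δ n) ≤ (A * d) ^ ((1:ℝ) + ε) :=
      Real.rpow_le_rpow_of_exponent_le hAd1 (hN n (by omega)).2.le
    have h5 : (A * d) ^ ((1:ℝ) + ε) = A ^ ((1:ℝ) + ε) * d ^ ((1:ℝ) + ε) :=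
      Real.mul_rpow hA0.le hd0.le
    calc (q' n : ℝ) ≤ C * (q n : ℝ) ^ (θ n) := ha n
      _ ≤ C * (A ^ ((1:ℝ) + ε) * d ^ ((1:ℝ) + ε)) := by
          apply mul_le_mul_of_nonneg_left _ hC.le
          rw [h2, ← h5]
          exact le_trans h3 h4
      _ = K * d ^ ((1:ℝ) + ε) := by rw [hKdef]; ring
  have hq'0 : (0:ℝ) < (q' n : ℝ) := hq'pos n
  have hτn : 1 + τ n < ℓ + ε := (hN n (by omega)).1
  have hths := hQ₁ d hdQ₁
  by_cases hcase : (x : ℝ) = (p' n : ℝ) / (q' n : ℝ)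
  · -- x coincides with p'_n/q'_n
    have h1 : c₃ * (q' n : ℝ) ^ (-(1 + τ n)) ≤ |α - (x : ℝ)| := by
      rw [hcase]; exact hb₃ n
    have h2 : (q' n : ℝ) ^ (-(ℓ + ε)) ≤ (q' n : ℝ) ^ (-(1 + τ n)) :=
      Real.rpow_le_rpow_of_exponent_le (hq'1 n) (by linarith)
    have h3 : (K * d ^ ((1:ℝ) + ε)) ^ (-(ℓ + ε)) ≤ (q' n : ℝ) ^ (-(ℓ + ε)) := by
      rw [Real.rpow_neg hq'0.le, Real.rpow_neg (by positivity)]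
      exact inv_anti' (Real.rpow_pos_of_pos hq'0 _)
        (Real.rpow_le_rpow hq'0.le hq'K (by linarith))
    have hfinal : d ^ (-m) ≤ c₃ * (K * d ^ ((1:ℝ) + ε)) ^ (-(ℓ + ε)) := by
      have hu : (0:ℝ) < d ^ m := Real.rpow_pos_of_pos hd0 _
      have hv : (0:ℝ) < d ^ ((1 + ε) * (ℓ + ε)) := Real.rpow_pos_of_pos hd0 _
      have hw : (0:ℝ) < K ^ (ℓ + ε) := Real.rpow_pos_of_pos hK0 _
      have e1 : (K * d ^ ((1:ℝ) + ε)) ^ (-(ℓ + ε))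
          = (K ^ (ℓ + ε))⁻¹ * (d ^ ((1 + ε) * (ℓ + ε)))⁻¹ := by
        rw [Real.rpow_neg (by positivity), Real.mul_rpow hK0.le (by positivity), mul_inv,
          ← Real.rpow_mul hd0.le]
      have e2 : d ^ (-m) = (d ^ m)⁻¹ := Real.rpow_neg hd0.le m
      have hW : K ^ (ℓ + ε) / c₃ ≤ d ^ m / d ^ ((1 + ε) * (ℓ + ε)) := by
        have := hths.2
        rwa [Real.rpow_sub hd0] at this
      rw [e1, e2]
      exact aux_div hu hv hw hc₃ hW
    calc d ^ (-m) ≤ c₃ * (K * d ^ ((1:ℝ) + ε)) ^ (-(ℓ + ε)) := hfinal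
      _ ≤ c₃ * (q' n : ℝ) ^ (-(ℓ + ε)) := mul_le_mul_of_nonneg_left h3 hc₃.le
      _ ≤ c₃ * (q' n : ℝ) ^ (-(1 + τ n)) := mul_le_mul_of_nonneg_left h2 hc₃.le
      _ ≤ |α - (x : ℝ)| := h1
  · -- x differs from p'_n/q'_n
    have h8 := rat_gap x (p' n) (q' n) (hq' n) hcase
    have h9 : |(x : ℝ) - (p' n : ℝ) / (q' n : ℝ)|
        ≤ |α - (x : ℝ)| + |α - (p' n : ℝ) / (q' n : ℝ)| := by
      have h := abs_sub_le (x : ℝ) α ((p' n : ℝ) / (q' n : ℝ))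
      rwa [abs_sub_comm (x : ℝ) α] at h
    have h10 : |α - (p' n : ℝ) / (q' n : ℝ)| ≤ 1 / (2 * d * (q' n : ℝ)) := by
      have h12 : (0:ℝ) < (q' n : ℝ) ^ (τ n) := Real.rpow_pos_of_pos hq'0 _
      have e1 : (q' n : ℝ) ^ (-(1 + τ n)) = ((q' n : ℝ) ^ (τ n))⁻¹ * ((q' n : ℝ))⁻¹ := by
        rw [Real.rpow_neg hq'0.le, Real.rpow_add hq'0, Real.rpow_one, mul_inv,
          mul_comm ((q' n : ℝ))⁻¹]
      have h11 : c₄ * ((q' n : ℝ) ^ (τ n))⁻¹ ≤ (2 * d)⁻¹ := by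
        have h13 : c₄ / ((q' n : ℝ) ^ (τ n)) ≤ 1 / (2 * d) := by
          rw [div_le_div_iff₀ h12 (by positivity)]
          nlinarith
        simpa [div_eq_mul_inv, one_div] using h13
      calc |α - (p' n : ℝ) / (q' n : ℝ)| ≤ c₄ * (q' n : ℝ) ^ (-(1 + τ n)) := hb₄ n
        _ = c₄ * ((q' n : ℝ) ^ (τ n))⁻¹ * ((q' n : ℝ))⁻¹ := by rw [e1]; ring
        _ ≤ (2 * d)⁻¹ * ((q' n : ℝ))⁻¹ :=
          mul_le_mul_of_nonneg_right h11 (by positivity)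
        _ = 1 / (2 * d * (q' n : ℝ)) := by rw [one_div]; ring
    have h13 : 1 / (2 * d * (q' n : ℝ)) ≤ |α - (x : ℝ)| := by
      have e2 : 1 / (d * (q' n : ℝ)) - 1 / (2 * d * (q' n : ℝ))
          = 1 / (2 * d * (q' n : ℝ)) := by
        field_simp
        ring
      have h14 := le_trans h8 h9
      linarith
    have h14 : 2 * d * (q' n : ℝ) ≤ d ^ m := by
      have e3 : d ^ ((2:ℝ) + ε) = d * d ^ ((1:ℝ) + ε) := by
        rw [show (2:ℝ) + ε = 1 + (1 + ε) by ring, Real.rpow_add hd0, Real.rpow_one]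
      calc 2 * d * (q' n : ℝ) ≤ 2 * d * (K * d ^ ((1:ℝ) + ε)) := by
            apply mul_le_mul_of_nonneg_left hq'K (by positivity)
        _ = 2 * K * (d * d ^ ((1:ℝ) + ε)) := by ring
        _ = 2 * K * d ^ ((2:ℝ) + ε) := by rw [e3]
        _ ≤ d ^ (m - (2 + ε)) * d ^ ((2:ℝ) + ε) := by
            apply mul_le_mul_of_nonneg_right hths.1 (by positivity)
        _ = d ^ m := by
            rw [← Real.rpow_add hd0]
            congr 1
            ring
    calc d ^ (-m) = (d ^ m)⁻¹ := Real.rpow_neg hd0.le m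
      _ ≤ (2 * d * (q' n : ℝ))⁻¹ := inv_anti' (by positivity) h14
      _ = 1 / (2 * d * (q' n : ℝ)) := (one_div _).symm
      _ ≤ |α - (x : ℝ)| := h13

/-- The lower bound construction: infinitely many very good approximations. -/
private lemma mem_estimate
    (α : ℝ) (hirr : Irrational α) (p' q' : ℕ → ℤ) (hq' : ∀ n, 1 ≤ q' n)
    (τ : ℕ → ℝ) (hτ : ∀ n, 1 ≤ τ n)
    (c₄ : ℝ) (hc₄ : 0 < c₄)
    (hb₄ : ∀ n, |α - (p' n : ℝ) / (q' n : ℝ)| ≤ c₄ * (q' n : ℝ) ^ (-(1 + τ n)))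
    (hq'τ : Tendsto (fun n => (q' n : ℝ) ^ (τ n)) atTop atTop)
    (m m' : ℝ) (hm2 : 2 ≤ m) (hmm' : m < m')
    (hS : {n | m' < 1 + τ n}.Infinite) :
    {x : ℚ | |α - (x : ℝ)| < (x.den : ℝ) ^ (-m)}.Infinite := by
  have hq'1 : ∀ n, (1:ℝ) ≤ (q' n : ℝ) := fun n => by exact_mod_cast hq' n
  have hq'pos : ∀ n, (0:ℝ) < (q' n : ℝ) := fun n => lt_of_lt_of_le one_pos (hq'1 n)
  set xq : ℕ → ℚ := fun n => (p' n : ℚ) / (q' n : ℚ) with hxqdef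
  have hxq_cast : ∀ n, ((xq n : ℚ) : ℝ) = (p' n : ℝ) / (q' n : ℝ) := by
    intro n; rw [hxqdef]; push_cast; ring
  have hxq_den : ∀ n, ((xq n).den : ℝ) ≤ (q' n : ℝ) := by
    intro n
    have h1 : (((xq n).den : ℤ)) ∣ q' n := by
      have := Rat.den_dvd (p' n) (q' n)
      rwa [Rat.divInt_eq_div] at this
    have h2 : ((xq n).den : ℤ) ≤ q' n :=
      Int.le_of_dvd (lt_of_lt_of_le one_pos (hq' n)) h1
    exact_mod_cast h2
  have hden1 : ∀ x : ℚ, (1:ℝ) ≤ (x.den : ℝ) := fun x => by exact_mod_cast x.den_pos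
  have hm'0 : (0:ℝ) < m' := by linarith
  set γ := (m' - m) / m' with hγdef
  have hγ : 0 < γ := div_pos (by linarith) hm'0
  have hev : ∀ᶠ n in atTop, c₄ < ((q' n : ℝ) ^ (τ n)) ^ γ :=
    ((tendsto_rpow_atTop hγ).comp hq'τ).eventually_gt_atTop c₄
  obtain ⟨N₀, hN₀⟩ := eventually_atTop.mp hev
  set S' : Set ℕ := {n | m' < 1 + τ n} \ Set.Iio N₀ with hS'def
  have hS' : S'.Infinite := hS.diff (Set.finite_Iio N₀)
  have hsub : xq '' S' ⊆ {x : ℚ | |α - (x : ℝ)| < (x.den : ℝ) ^ (-m)} := by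
    rintro y ⟨n, hn, rfl⟩
    have hτn : m' < 1 + τ n := hn.1
    have hnN₀ : N₀ ≤ n := not_lt.mp hn.2
    have hc₄γ := hN₀ n hnN₀
    have hQ1 : (1:ℝ) ≤ (q' n : ℝ) := hq'1 n
    have hQ0 : (0:ℝ) < (q' n : ℝ) := hq'pos n
    have hτm : τ n * γ ≤ 1 + τ n - m := by
      rw [hγdef, ← mul_div_assoc, div_le_iff₀ hm'0]
      nlinarith [mul_nonneg (by linarith : (0:ℝ) ≤ m)
        (by linarith : (0:ℝ) ≤ τ n - (m' - 1))]
    have h4 : c₄ < (q' n : ℝ) ^ (1 + τ n - m) := by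
      have h2 : c₄ < (q' n : ℝ) ^ (τ n * γ) := by
        rw [Real.rpow_mul hQ0.le]; exact hc₄γ
      exact lt_of_lt_of_le h2 (Real.rpow_le_rpow_of_exponent_le hQ1 hτm)
    have key : c₄ * (q' n : ℝ) ^ (-(1 + τ n)) < (q' n : ℝ) ^ (-m) := by
      have h5 : (q' n : ℝ) ^ (1 + τ n - m) * (q' n : ℝ) ^ (-(1 + τ n))
          = (q' n : ℝ) ^ (-m) := by
        rw [← Real.rpow_add hQ0]
        congr 1
        ring
      calc c₄ * (q' n : ℝ) ^ (-(1 + τ n))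
          < (q' n : ℝ) ^ (1 + τ n - m) * (q' n : ℝ) ^ (-(1 + τ n)) :=
            mul_lt_mul_of_pos_right h4 (Real.rpow_pos_of_pos hQ0 _)
        _ = (q' n : ℝ) ^ (-m) := h5
    have h6 : (q' n : ℝ) ^ (-m) ≤ ((xq n).den : ℝ) ^ (-m) := by
      rw [Real.rpow_neg hQ0.le,
        Real.rpow_neg (by linarith [hden1 (xq n)] : (0:ℝ) ≤ ((xq n).den : ℝ))]
      exact inv_anti' (Real.rpow_pos_of_pos (lt_of_lt_of_le one_pos (hden1 (xq n))) m)
        (Real.rpow_le_rpow (by linarith [hden1 (xq n)]) (hxq_den n) (by linarith))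
    simp only [Set.mem_setOf_eq]
    calc |α - ((xq n : ℚ) : ℝ)| ≤ c₄ * (q' n : ℝ) ^ (-(1 + τ n)) := by
          rw [hxq_cast n]; exact hb₄ n
      _ < (q' n : ℝ) ^ (-m) := key
      _ ≤ ((xq n).den : ℝ) ^ (-m) := h6
  have hinf : (xq '' S').Infinite := by
    by_contra hfin
    rw [Set.not_infinite] at hfin
    have hne : (xq '' S').Nonempty := hS'.nonempty.image xq
    have hFne : hfin.toFinset.Nonempty := by rwa [Set.Finite.toFinset_nonempty]
    set ε := hfin.toFinset.inf' hFne (fun y => |α - (y : ℝ)|) with hεdef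
    have hεpos : 0 < ε := by
      rw [hεdef, Finset.lt_inf'_iff]
      intro y _
      exact abs_pos.mpr (sub_ne_zero.mpr (hirr.ne_rat y))
    have h0 : Tendsto (fun n => c₄ * ((q' n : ℝ) ^ (τ n))⁻¹) atTop (nhds 0) := by
      have h1 := hq'τ.inv_tendsto_atTop
      have h2 := h1.const_mul c₄
      simpa using h2
    obtain ⟨N₁, hN₁⟩ := eventually_atTop.mp (h0.eventually_lt_const hεpos)
    obtain ⟨n, hnS', hnotin⟩ := hS'.exists_notMem_finite (Set.finite_Iio N₁)
    have hnN₁ : N₁ ≤ n := not_lt.mp (by simpa using hnotin)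
    have hx_mem : xq n ∈ hfin.toFinset := by
      rw [Set.Finite.mem_toFinset]
      exact ⟨n, hnS', rfl⟩
    have h7 := Finset.inf'_le (fun y : ℚ => |α - (y : ℝ)|) hx_mem
    rw [← hεdef] at h7
    have h8 : |α - ((xq n : ℚ) : ℝ)| < ε := by
      have hQ0 : (0:ℝ) < (q' n : ℝ) := hq'pos n
      have e1 : (q' n : ℝ) ^ (-(1 + τ n)) ≤ ((q' n : ℝ) ^ (τ n))⁻¹ := by
        rw [← Real.rpow_neg hQ0.le (τ n)]
        exact Real.rpow_le_rpow_of_exponent_le (hq'1 n) (by linarith [hτ n])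
      calc |α - ((xq n : ℚ) : ℝ)| ≤ c₄ * (q' n : ℝ) ^ (-(1 + τ n)) := by
            rw [hxq_cast n]; exact hb₄ n
        _ ≤ c₄ * ((q' n : ℝ) ^ (τ n))⁻¹ := mul_le_mul_of_nonneg_left e1 hc₄.le
        _ < ε := hN₁ n hnN₁
    exact absurd h8 (not_lt.mpr h7)
  exact hinf.mono hsub

/-- Corollary of Proposition 1: under the same hypotheses with `τ_n ≥ 1`, if moreover
`θ_n/δ_n → 1`, then the approximations `p'_n/q'_n` are nearly optimal and
`μ(α) = limsup_n (1 + τ_n)`. -/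
theorem statement6
    (α : ℝ) (p p' : ℕ → ℤ) (q q' : ℕ → ℤ)
    (hq : ∀ n, 1 ≤ q n) (hq' : ∀ n, 1 ≤ q' n)
    (θ δ τ : ℕ → ℝ)
    (hθ : ∀ n, 1 ≤ θ n) (hδ : ∀ n, 0 < δ n) (hτ : ∀ n, 1 ≤ τ n)
    (C c₁ c₂ c₃ c₄ c₅ : ℝ)
    (hC : 0 < C) (hc₁ : 0 < c₁) (hc₂ : 0 < c₂) (hc₃ : 0 < c₃) (hc₄ : 0 < c₄) (hc₅ : 0 < c₅)
    (ha : ∀ n, (q' n : ℝ) ≤ C * (q n : ℝ) ^ (θ n))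
    (hb₁ : ∀ n, c₁ * (q n : ℝ) ^ (-(1 + δ n)) ≤ |α - (p n : ℝ) / (q n : ℝ)|)
    (hb₂ : ∀ n, |α - (p n : ℝ) / (q n : ℝ)| ≤ c₂ * (q n : ℝ) ^ (-(1 + δ n)))
    (hb₃ : ∀ n, c₃ * (q' n : ℝ) ^ (-(1 + τ n)) ≤ |α - (p' n : ℝ) / (q' n : ℝ)|)
    (hb₄ : ∀ n, |α - (p' n : ℝ) / (q' n : ℝ)| ≤ c₄ * (q' n : ℝ) ^ (-(1 + τ n)))
    (hc₅' : ∀ n, c₅ * (q (n + 1) : ℝ) ^ (δ (n + 1)) ≤ (q' n : ℝ) ^ (τ n))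
    (htend : Filter.Tendsto (fun n => (q n : ℝ) ^ (δ n)) Filter.atTop Filter.atTop)
    (hratio : Filter.Tendsto (fun n => θ n / δ n) Filter.atTop (nhds 1)) :
    irrationalityExponent α =
      Filter.limsup (fun n => ((1 + τ n : ℝ) : EReal)) Filter.atTop := by
  classical
  set L := Filter.limsup (fun n => ((1 + τ n : ℝ) : EReal)) Filter.atTop with hLdef
  have hq1 : ∀ n, (1:ℝ) ≤ (q n : ℝ) := fun n => by exact_mod_cast hq n
  have hqpos : ∀ n, (0:ℝ) < (q n : ℝ) := fun n => lt_of_lt_of_le one_pos (hq1 n)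
  -- α is irrational
  have hirr : Irrational α := by
    by_contra h
    obtain ⟨r, hr⟩ := not_not.mp h
    have hgap : ∀ n, (q n : ℝ) ^ (δ n) ≤ c₂ * r.den := by
      intro n
      have hne : (r : ℝ) ≠ (p n : ℝ) / (q n : ℝ) := by
        intro h'
        have h0 := hb₁ n
        rw [← hr, ← h', sub_self, abs_zero] at h0
        have : (0:ℝ) < c₁ * (q n : ℝ) ^ (-(1 + δ n)) :=
          mul_pos hc₁ (Real.rpow_pos_of_pos (hqpos n) _)
        linarith
      have h1 := rat_gap r (p n) (q n) (hq n) hne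
      rw [hr] at h1
      have h2 := le_trans h1 (hb₂ n)
      have e : (q n : ℝ) ^ (-(1 + δ n)) = ((q n : ℝ) * (q n : ℝ) ^ (δ n))⁻¹ := by
        rw [Real.rpow_neg (hqpos n).le, Real.rpow_add (hqpos n), Real.rpow_one]
      rw [e, ← div_eq_mul_inv] at h2
      have hden : (0:ℝ) < (r.den : ℝ) := by exact_mod_cast r.den_pos
      have ht : (0:ℝ) < (q n : ℝ) ^ (δ n) := Real.rpow_pos_of_pos (hqpos n) _
      rw [div_le_div_iff₀ (mul_pos hden (hqpos n)) (mul_pos (hqpos n) ht)] at h2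
      nlinarith [hqpos n]
    obtain ⟨n, hn⟩ := (htend.eventually_gt_atTop (c₂ * r.den)).exists
    exact absurd (hgap n) (not_le.mpr hn)
  -- q'^τ tends to infinity
  have hq'τ : Tendsto (fun n => (q' n : ℝ) ^ (τ n)) atTop atTop := by
    have h1 : Tendsto (fun n => c₅ * (q (n + 1) : ℝ) ^ (δ (n + 1))) atTop atTop :=
      (htend.comp (tendsto_add_atTop_nat 1)).const_mul_atTop hc₅
    exact tendsto_atTop_mono hc₅' h1
  -- LOWER BOUND: every real m < L is in the defining set
  have hmem : ∀ m : ℝ, (m : EReal) < L →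
      {x : ℚ | |α - (x : ℝ)| < (x.den : ℝ) ^ (-m)}.Infinite := by
    intro m hm
    rcases lt_or_ge m 2 with hm2 | hm2
    · refine (Real.infinite_rat_abs_sub_lt_one_div_den_sq_of_irrational hirr).mono ?_
      intro x hx
      simp only [Set.mem_setOf_eq] at hx ⊢
      refine lt_of_lt_of_le hx ?_
      have h1 : (1:ℝ) ≤ (x.den : ℝ) := by exact_mod_cast x.den_pos
      have h2 : (1:ℝ) / (x.den : ℝ) ^ 2 = (x.den : ℝ) ^ (-(2:ℝ)) := by
        rw [Real.rpow_neg (by linarith), one_div]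
        congr 1
        rw [← Real.rpow_natCast (x.den : ℝ) 2]
        norm_num
      rw [h2]
      exact Real.rpow_le_rpow_of_exponent_le h1 (by linarith)
    · obtain ⟨m', hmm', hm'L⟩ := EReal.exists_between_coe_real hm
      have hmm'r : m < m' := by exact_mod_cast hmm'
      have hS : {n | m' < 1 + τ n}.Infinite := by
        rw [← Nat.frequently_atTop_iff_infinite]
        have h1 := frequently_lt_of_lt_limsup (by isBoundedDefault) hm'L
        exact h1.mono fun n hn => by exact_mod_cast hn
      exact mem_estimate α hirr p' q' hq' τ hτ c₄ hc₄ hb₄ hq'τ m m' hm2 hmm'r hS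
  -- UPPER BOUND
  have hup : ∀ m : ℝ, {x : ℚ | |α - (x : ℝ)| < (x.den : ℝ) ^ (-m)}.Infinite →
      (m : EReal) ≤ L := by
    intro m hinf
    by_contra hcon
    push_neg at hcon
    have hL2 : ((2:ℝ) : EReal) ≤ L :=
      le_limsup_of_frequently_le (Frequently.of_forall fun n => by
        exact_mod_cast (by linarith [hτ n] : (2:ℝ) ≤ 1 + τ n))
    have hLtop : L ≠ ⊤ := hcon.ne_top
    have hLbot : L ≠ ⊥ := fun hbot => EReal.coe_ne_bot 2 (le_bot_iff.mp (hbot ▸ hL2))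
    set ℓ := L.toReal with hℓdef
    have hLcoe : (ℓ : EReal) = L := EReal.coe_toReal hLtop hLbot
    have hℓ2 : (2:ℝ) ≤ ℓ := by
      rw [← hLcoe] at hL2
      exact_mod_cast hL2
    have hℓm : ℓ < m := by
      rw [← hLcoe] at hcon
      exact_mod_cast hcon
    set ε := min 1 ((m - ℓ) / (ℓ + 3)) with hεdef
    have hε0 : 0 < ε := lt_min one_pos (div_pos (by linarith) (by linarith))
    have hε1 : ε ≤ 1 := min_le_left _ _
    have hε3 : ε * (ℓ + 3) ≤ m - ℓ :=
      (le_div_iff₀ (by linarith : (0:ℝ) < ℓ + 3)).mp (min_le_right _ _)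
    have hεsq : ε * ε ≤ ε := by nlinarith
    have hexp1 : 0 < m - (2 + ε) := by nlinarith
    have hexp2 : 0 < m - (1 + ε) * (ℓ + ε) := by nlinarith
    have hev1 : ∀ᶠ n in atTop, 1 + τ n < ℓ + ε := by
      have h1 : L < ((ℓ + ε : ℝ) : EReal) := by
        rw [← hLcoe]
        exact_mod_cast (by linarith : ℓ < ℓ + ε)
      exact (eventually_lt_of_limsup_lt h1).mono fun n hn => by exact_mod_cast hn
    have hev2 : ∀ᶠ n in atTop, θ n / δ n < 1 + ε :=
      hratio.eventually_lt_const (by linarith)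
    obtain ⟨N, hN⟩ := eventually_atTop.mp (hev1.and hev2)
    set A : ℝ := max (2 * c₄ / c₅) 1 with hAdef
    have hA0 : (0:ℝ) < A := lt_of_lt_of_le one_pos (le_max_right _ _)
    set K := C * A ^ ((1:ℝ) + ε) with hKdef
    have hth1 : ∀ᶠ s : ℝ in atTop, 2 * K ≤ s ^ (m - (2 + ε)) :=
      (tendsto_rpow_atTop hexp1).eventually_ge_atTop _
    have hth2 : ∀ᶠ s : ℝ in atTop, K ^ (ℓ + ε) / c₃ ≤ s ^ (m - (1 + ε) * (ℓ + ε)) :=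
      (tendsto_rpow_atTop hexp2).eventually_ge_atTop _
    obtain ⟨Q₁, hQ₁⟩ := eventually_atTop.mp (hth1.and hth2)
    set Q₀ : ℝ := max (max Q₁ ((Finset.range (N + 1)).sup' (by simp)
        (fun k => (q' k : ℝ) ^ (τ k)) / (2 * c₄) + 1)) 1 with hQ₀def
    have hQ₀1 : (1:ℝ) ≤ Q₀ := le_max_right _ _
    have key : ∀ x : ℚ, Q₀ ≤ (x.den : ℝ) → (x.den : ℝ) ^ (-m) ≤ |α - (x : ℝ)| := by
      intro x hx
      exact key_estimate α p' q q' hq hq' θ δ τ hθ hδ C c₃ c₄ c₅ hC hc₃ hc₄ hc₅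
        ha hb₃ hb₄ hc₅' hq'τ m ℓ ε hε0 (by linarith) N hN A K Q₁ hAdef hKdef hQ₁ x hx
    exact hinf (finite_of_key α m Q₀ hQ₀1 key)
  -- put the two bounds together
  unfold irrationalityExponent
  apply le_antisymm
  · apply sSup_le
    rintro μ ⟨m, rfl, hinfm⟩
    exact hup m hinfm
  · by_contra hlt
    push_neg at hlt
    obtain ⟨m, h1, h2⟩ := EReal.exists_between_coe_real hlt
    have hmemS : (m : EReal) ∈ {μ : EReal | ∃ m' : ℝ, μ = (m' : EReal) ∧
        {x : ℚ | |α - (x : ℝ)| < (x.den : ℝ) ^ (-m')}.Infinite} := ⟨m, rfl, hmem m h2⟩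
    exact absurd (le_sSup hmemS) (not_le.mpr h1)
end

section
/- Let d ≥ 2 be an integer, A, B ∈ ℚ[X] nonzero coprime polynomials of degrees r_a, r_b with leading coefficients α, β, and let f ∈ ℚ((z^{−1})) be a non-rational formal Laurent series satisfying B(z)f(z) = A(z)f(z^d). Let p_k/q_k be a convergent of f with d_k = deg q_k, and for m ≥ 1 set q_{k,m}(z) = (∏_{t=0}^{m−1} B(z^{d^t}))·q_k(z^{d^m}) and p_{k,m}(z) = (∏_{t=0}^{m−1} A(z^{d^t}))·p_k(z^{d^m}). Let b ∈ ℝ with |b| > 1 lie inside the disc of convergence of f and assume A(b^{d^t})·B(b^{d^t}) ≠ 0 for all t ≥ 0. Then there exist positive constants c₁, c₂, c₃, c₄ (depending on A, B, k but not on m) and M such that for all m ≥ M: c₁ ≤ |q_{k,m}(b)|/(|β|^m·|b|^{d^m(r_b/(d−1) + d_k)}) ≤ c₂ and c₃ ≤ |q_{k,m}(b)·f(b) − p_{k,m}(b)|/(|α|^m·|b|^{d^m(r_a/(d−1) − d_{k+1})}) ≤ c₄. -/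
open Polynomial Filter

/-- For a formal Laurent series `f(z) = ∑_i c i · z^{-i}` in `z⁻¹` (coefficients `c : ℤ → ℚ`),
`polyMulCoeff P c i` is the coefficient of `z^{-i}` in the product `P(z)·f(z)`. -/
noncomputable def polyMulCoeff (P : Polynomial ℚ) (c : ℤ → ℚ) (i : ℤ) : ℚ :=
  ∑ j ∈ Finset.range (P.natDegree + 1), P.coeff j * c (i + j)

/-- Coefficient of `z^{-i}` in `f(z^d)`, where `f(z) = ∑_i c i · z^{-i}`. -/
noncomputable def substPowCoeff (d : ℕ) (c : ℤ → ℚ) (i : ℤ) : ℚ :=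
  if (d : ℤ) ∣ i then c (i / d) else 0

/-- Coefficient of `z^{-i}` in a polynomial `p(z)`. -/
noncomputable def polyCoeffZinv (p : Polynomial ℚ) (i : ℤ) : ℚ :=
  if i ≤ 0 then p.coeff (-i).toNat else 0

/-- `c` is the coefficient function of a Laurent series in `z⁻¹`:
`f(z) = ∑_{i ≥ i₀} c i · z^{-i}` (support bounded below). -/
def IsLaurentSupport (c : ℤ → ℚ) : Prop := ∃ i₀ : ℤ, ∀ i < i₀, c i = 0

/-- The Mahler functional equation `B(z)·f(z) = A(z)·f(z^d)`, stated coefficientwise for the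
Laurent series `f(z) = ∑_i c i · z^{-i}`. -/
def MahlerEq (d : ℕ) (A B : Polynomial ℚ) (c : ℤ → ℚ) : Prop :=
  ∀ i : ℤ, polyMulCoeff B c i = polyMulCoeff A (substPowCoeff d c) i

/-- The Laurent series `f(z) = ∑_i c i · z^{-i}` is a rational function. -/
def IsRationalFun (c : ℤ → ℚ) : Prop :=
  ∃ p q : Polynomial ℚ, q ≠ 0 ∧ ∀ i : ℤ, polyMulCoeff q c i = polyCoeffZinv p i

/-- `p/q` is a continued-fraction convergent of the Laurent series `f(z) = ∑_i c i · z^{-i}`: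
`p, q` are coprime, `q ≠ 0`, and `q(z)f(z) - p(z)` only involves the powers `z^{-i}` with
`i > deg q` (ultrametric best-approximation criterion). -/
def IsConvergent (c : ℤ → ℚ) (p q : Polynomial ℚ) : Prop :=
  IsCoprime p q ∧ q ≠ 0 ∧
  ∀ i : ℤ, i ≤ (q.natDegree : ℤ) → polyMulCoeff q c i = polyCoeffZinv p i

/-- `p/q` is a convergent of `f` whose error `q(z)f(z) - p(z) = ∑_{i ≥ e} c' i · z^{-i}` has
order exactly `e` (so `c' e ≠ 0`); for the `k`-th convergent, `e` is the degree `d_{k+1}` of the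
denominator of the next convergent. -/
def IsConvergentWithOrder (c : ℤ → ℚ) (p q : Polynomial ℚ) (e : ℤ) : Prop :=
  IsCoprime p q ∧ q ≠ 0 ∧ (q.natDegree : ℤ) < e ∧
  (∀ i : ℤ, i < e → polyMulCoeff q c i = polyCoeffZinv p i) ∧
  polyMulCoeff q c e ≠ polyCoeffZinv p e

/-- The value `f(b) = ∑_i c i · b^{-i}` of the Laurent series at a point `b`. -/
noncomputable def mahlerValue (c : ℤ → ℚ) (b : ℝ) : ℝ := ∑' i : ℤ, (c i : ℝ) * b ^ (-i)

/-- `b` lies inside the disc of convergence of `f`: `∑_i c i · b^{-i}` converges absolutely. -/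
def InDiscOfConvergence (c : ℤ → ℚ) (b : ℝ) : Prop :=
  Summable fun i : ℤ => |(c i : ℝ) * b ^ (-i)|

/-- `Φ(f)`: the set of degrees of denominators of convergents of `f`. -/
def convDegrees (c : ℤ → ℚ) : Set ℕ :=
  {n | ∃ p q : Polynomial ℚ, IsConvergent c p q ∧ q.natDegree = n}

/-- `[u,v]` is a gap in `Φ(f)`: `u, v ∈ Φ(f)`, `u < v`, and no element of `Φ(f)` lies strictly
between `u` and `v`. Its size is `v - u`. -/
def GapIn (c : ℤ → ℚ) (u v : ℕ) : Prop :=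
  u ∈ convDegrees c ∧ v ∈ convDegrees c ∧ u < v ∧
  ∀ w : ℕ, u < w → w < v → w ∉ convDegrees c

/-!
Iterating the functional equation gives `f(b) ∏_{t<m} B(b^{d^t}) = f(b^{d^m}) ∏_{t<m} A(b^{d^t})`,
hence `q_{k,m}(b) f(b) - p_{k,m}(b) = ∏_{t<m} A(b^{d^t}) · (q_k f - p_k)(b^{d^m})`. As `|x| → ∞`,
`|q_k(x)| ~ |lc q_k| |x|^{d_k}`, and `(q_k f - p_k)(x) = x^{-d_{k+1}} S(x)` where, by dominated
convergence, `S(x)` tends to the nonzero leading coefficient of the error series. For a product,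
`|P(b^{d^t})| = |lc P| |b|^{d^t deg P} (1 + O(|b|^{-t}))`, so the normalised partial products
converge to a positive infinite product, while `∑_{t<m} d^t = (d^m - 1)/(d - 1)` produces the
exponent `d^m deg P/(d - 1)`. Both normalised quantities thus converge to positive limits.
-/

open Topology Bornology Finset

section LaurentSeries

variable {d : ℕ} {c c₁ c₂ : ℤ → ℚ} {x y : ℝ}

theorem InDiscOfConvergence.summable (h : InDiscOfConvergence c x) :
    Summable fun i : ℤ => (c i : ℝ) * x ^ (-i) :=
  h.of_abs

theorem abs_zpow_neg_le_of_abs_le (hx : x ≠ 0) (hxy : |x| ≤ |y|) {i : ℤ} (hi : 0 ≤ i) :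
    |y ^ (-i)| ≤ |x ^ (-i)| := by
  lift i to ℕ using hi
  simp only [zpow_neg, zpow_natCast, abs_inv, abs_pow]
  exact inv_anti₀ (by positivity) (pow_le_pow_left₀ (abs_nonneg x) hxy i)

theorem InDiscOfConvergence.mono (h : InDiscOfConvergence c x) (hc : IsLaurentSupport c)
    (hx : x ≠ 0) (hxy : |x| ≤ |y|) : InDiscOfConvergence c y := by
  obtain ⟨i₀, hi₀⟩ := hc
  have hbound : ∀ i ∉ Set.Ico i₀ 0, ‖|(c i : ℝ) * y ^ (-i)|‖ ≤ |(c i : ℝ) * x ^ (-i)| := by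
    intro i hi
    rw [Real.norm_eq_abs, abs_abs]
    rcases lt_or_ge i i₀ with hlt | hge
    · simp [hi₀ i hlt]
    · have hi0 : 0 ≤ i := by simp only [Set.mem_Ico, not_and, not_lt] at hi; exact hi hge
      rw [abs_mul, abs_mul]
      exact mul_le_mul_of_nonneg_left (abs_zpow_neg_le_of_abs_le hx hxy hi0) (abs_nonneg _)
  exact h.of_norm_bounded_eventually ((Set.finite_Ico i₀ 0).eventually_cofinite_notMem.mono hbound)

theorem InDiscOfConvergence.shift (h : InDiscOfConvergence c x) (hx : x ≠ 0) (j : ℤ) :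
    InDiscOfConvergence (fun i => c (i + j)) x := by
  have hj := ((Equiv.addRight j).summable_iff (f := fun i => |(c i : ℝ) * x ^ (-i)|)).2 h
  refine (hj.mul_left |x ^ j|).congr fun i => ?_
  simp only [Function.comp_apply, Equiv.coe_addRight, ← abs_mul]
  rw [neg_add, zpow_add₀ hx, zpow_neg x j]
  field_simp

theorem InDiscOfConvergence.sub (h₁ : InDiscOfConvergence c₁ x)
    (h₂ : InDiscOfConvergence c₂ x) : InDiscOfConvergence (fun i => c₁ i - c₂ i) x := by
  refine Summable.of_nonneg_of_le (fun i => abs_nonneg _) (fun i => ?_) (h₁.add h₂)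
  push_cast
  rw [sub_mul]
  exact abs_sub _ _

theorem mahlerValue_sub (h₁ : InDiscOfConvergence c₁ x) (h₂ : InDiscOfConvergence c₂ x) :
    mahlerValue (fun i => c₁ i - c₂ i) x = mahlerValue c₁ x - mahlerValue c₂ x := by
  simp only [mahlerValue, Rat.cast_sub, sub_mul]
  exact h₁.summable.tsum_sub h₂.summable

theorem mahlerValue_shift (hx : x ≠ 0) (j : ℤ) :
    mahlerValue (fun i => c (i + j)) x = x ^ j * mahlerValue c x := by
  rw [mahlerValue, mahlerValue, ← (Equiv.addRight j).tsum_eq (fun i => (c i : ℝ) * x ^ (-i)),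
    ← tsum_mul_left]
  refine tsum_congr fun i => ?_
  rw [Equiv.coe_addRight, neg_add, zpow_add₀ hx, zpow_neg x j]
  field_simp

theorem polyMulCoeff_mul_zpow (P : ℚ[X]) (c : ℤ → ℚ) (i : ℤ) (x : ℝ) :
    (polyMulCoeff P c i : ℝ) * x ^ (-i)
      = ∑ j ∈ range (P.natDegree + 1), (P.coeff j : ℝ) * ((c (i + j) : ℝ) * x ^ (-i)) := by
  simp only [polyMulCoeff, Rat.cast_sum, Rat.cast_mul, sum_mul, mul_assoc]

theorem InDiscOfConvergence.polyMulCoeff (h : InDiscOfConvergence c x) (hx : x ≠ 0)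
    (P : ℚ[X]) : InDiscOfConvergence (polyMulCoeff P c) x := by
  refine Summable.of_nonneg_of_le (fun i => abs_nonneg _) (fun i => ?_)
    (summable_sum (s := range (P.natDegree + 1))
      fun j _ => (h.shift hx j).mul_left |(P.coeff j : ℝ)|)
  rw [polyMulCoeff_mul_zpow]
  exact (abs_sum_le_sum_abs _ _).trans_eq (sum_congr rfl fun j _ => abs_mul _ _)

theorem mahlerValue_polyMulCoeff (h : InDiscOfConvergence c x) (hx : x ≠ 0) (P : ℚ[X]) :
    mahlerValue (polyMulCoeff P c) x = aeval x P * mahlerValue c x := by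
  simp only [mahlerValue, polyMulCoeff_mul_zpow]
  rw [Summable.tsum_finsetSum fun j _ => ?_, aeval_eq_sum_range, sum_mul]
  refine sum_congr rfl fun j _ => ?_
  rw [tsum_mul_left, show ∑' i : ℤ, (c (i + j) : ℝ) * x ^ (-i) = _ from mahlerValue_shift hx j,
    mahlerValue]
  · simp [zpow_natCast, Algebra.smul_def, mul_assoc]
  · exact (h.shift hx j).summable.mul_left _

theorem polyCoeffZinv_eq_zero (p : ℚ[X]) {i : ℤ}
    (hi : i ∉ (range (p.natDegree + 1)).image fun j : ℕ => -(j : ℤ)) :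
    polyCoeffZinv p i = 0 := by
  rw [polyCoeffZinv, ite_eq_right_iff]
  intro hi0
  refine coeff_eq_zero_of_natDegree_lt (not_le.1 fun hle => hi ?_)
  exact mem_image.2 ⟨(-i).toNat, mem_range.2 (by omega), by omega⟩

theorem inDiscOfConvergence_polyCoeffZinv (p : ℚ[X]) (x : ℝ) :
    InDiscOfConvergence (polyCoeffZinv p) x :=
  summable_of_ne_finset_zero (s := (range (p.natDegree + 1)).image fun j : ℕ => -(j : ℤ))
    fun i hi => by simp [polyCoeffZinv_eq_zero p hi]

theorem mahlerValue_polyCoeffZinv (p : ℚ[X]) (x : ℝ) :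
    mahlerValue (polyCoeffZinv p) x = aeval x p := by
  rw [mahlerValue, tsum_eq_sum (s := (range (p.natDegree + 1)).image fun j : ℕ => -(j : ℤ))
      fun i hi => by simp [polyCoeffZinv_eq_zero p hi],
    sum_image fun a _ b _ hab => by simpa using hab, aeval_eq_sum_range]
  refine sum_congr rfl fun j _ => ?_
  simp [polyCoeffZinv, Algebra.smul_def]

theorem substPowCoeff_mul (hd : d ≠ 0) (c : ℤ → ℚ) (k : ℤ) :
    substPowCoeff d c (d * k) = c k := by
  rw [substPowCoeff, if_pos (dvd_mul_right _ _), Int.mul_ediv_cancel_left _ (by exact_mod_cast hd)]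

theorem substPowCoeff_eq_zero (c : ℤ → ℚ) {i : ℤ} (hi : i ∉ Set.range fun k : ℤ => (d : ℤ) * k) :
    substPowCoeff d c i = 0 :=
  if_neg fun ⟨k, hk⟩ => hi ⟨k, hk.symm⟩

theorem substPowCoeff_mul_zpow (hd : d ≠ 0) (c : ℤ → ℚ) (x : ℝ) (k : ℤ) :
    (substPowCoeff d c (d * k) : ℝ) * x ^ (-(d * k)) = (c k : ℝ) * (x ^ d) ^ (-k) := by
  rw [substPowCoeff_mul hd, ← zpow_natCast, ← zpow_mul, neg_mul_eq_mul_neg]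

theorem InDiscOfConvergence.substPowCoeff (h : InDiscOfConvergence c (x ^ d)) (hd : d ≠ 0) :
    InDiscOfConvergence (substPowCoeff d c) x := by
  rw [InDiscOfConvergence, ← (mul_right_injective₀ (Int.natCast_ne_zero.2 hd)).summable_iff
    fun i hi => by simp [substPowCoeff_eq_zero c hi]]
  simp only [Function.comp_def, substPowCoeff_mul_zpow hd]
  exact h

theorem mahlerValue_substPowCoeff (hd : d ≠ 0) (c : ℤ → ℚ) (x : ℝ) :
    mahlerValue (substPowCoeff d c) x = mahlerValue c (x ^ d) := by
  rw [mahlerValue, ← (mul_right_injective₀ (Int.natCast_ne_zero.2 hd)).tsum_eq fun i hi => ?_]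
  · exact tsum_congr (substPowCoeff_mul_zpow hd c x)
  · by_contra hr
    simp [substPowCoeff_eq_zero c hr] at hi

theorem aeval_mul_mahlerValue_of_mahlerEq {A B : ℚ[X]} (hfeq : MahlerEq d A B c) (hd : d ≠ 0)
    (hx : x ≠ 0) (h : InDiscOfConvergence c x) (hxd : InDiscOfConvergence c (x ^ d)) :
    aeval x B * mahlerValue c x = aeval x A * mahlerValue c (x ^ d) := by
  rw [← mahlerValue_polyMulCoeff h hx, funext hfeq,
    mahlerValue_polyMulCoeff (hxd.substPowCoeff hd) hx, mahlerValue_substPowCoeff hd]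

theorem InDiscOfConvergence.pow (h : InDiscOfConvergence c x) (hc : IsLaurentSupport c)
    (hx : 1 ≤ |x|) {n : ℕ} (hn : n ≠ 0) : InDiscOfConvergence c (x ^ n) :=
  h.mono hc (abs_pos.1 (one_pos.trans_le hx)) (by rw [abs_pow]; exact le_self_pow₀ hx hn)

theorem mahlerValue_mul_prod_of_mahlerEq {A B : ℚ[X]} (hfeq : MahlerEq d A B c) (hd : d ≠ 0)
    (hc : IsLaurentSupport c) {b : ℝ} (hb : 1 ≤ |b|) (h : InDiscOfConvergence c b) (m : ℕ) :
    mahlerValue c b * ∏ t ∈ range m, aeval (b ^ d ^ t) B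
      = mahlerValue c (b ^ d ^ m) * ∏ t ∈ range m, aeval (b ^ d ^ t) A := by
  induction m with
  | zero => simp
  | succ m ih =>
    have hx : b ^ d ^ m ≠ 0 := pow_ne_zero _ (abs_pos.1 (one_pos.trans_le hb))
    have step := aeval_mul_mahlerValue_of_mahlerEq hfeq hd hx
      (h.pow hc hb (pow_ne_zero m hd))
      (by rw [← pow_mul, ← pow_succ]; exact h.pow hc hb (pow_ne_zero (m + 1) hd))
    rw [← pow_mul, ← pow_succ] at step
    simp only [prod_range_succ]
    linear_combination aeval (b ^ d ^ m) B * ih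
      + (∏ t ∈ range m, aeval (b ^ d ^ t) A) * step

end LaurentSeries

section Remainder

variable {c : ℤ → ℚ} {x : ℝ}

theorem tendsto_mahlerValue_cobounded {b : ℝ} (h0 : ∀ i < 0, c i = 0) (hb : b ≠ 0)
    (h : InDiscOfConvergence c b) : Tendsto (mahlerValue c) (cobounded ℝ) (𝓝 (c 0)) := by
  have hlim : ∀ i : ℤ, Tendsto (fun x : ℝ => (c i : ℝ) * x ^ (-i)) (cobounded ℝ)
      (𝓝 (if i = 0 then (c 0 : ℝ) else 0)) := by
    intro i
    rcases lt_trichotomy i 0 with hi | rfl | hi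
    · simp [h0 i hi, hi.ne]
    · simp
    · lift i to ℕ using hi.le
      have hi' : i ≠ 0 := by exact_mod_cast hi.ne'
      simpa [hi', zpow_neg, zpow_natCast, ← inv_pow, zero_pow hi'] using
        (tendsto_inv₀_cobounded.pow i).const_mul (c i : ℝ)
  have hbound : ∀ᶠ x in cobounded ℝ, ∀ i : ℤ,
      ‖(c i : ℝ) * x ^ (-i)‖ ≤ |(c i : ℝ) * b ^ (-i)| := by
    filter_upwards [eventually_cobounded_le_norm |b|] with x hx i
    rw [Real.norm_eq_abs, abs_mul, abs_mul]
    rcases lt_or_ge i 0 with hi | hi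
    · simp [h0 i hi]
    · exact mul_le_mul_of_nonneg_left (abs_zpow_neg_le_of_abs_le hb hx hi) (abs_nonneg _)
  have key := tendsto_tsum_of_dominated_convergence h hlim hbound
  rwa [tsum_ite_eq] at key

noncomputable def remainderCoeff (c : ℤ → ℚ) (p q : ℚ[X]) (i : ℤ) : ℚ :=
  polyMulCoeff q c i - polyCoeffZinv p i

theorem InDiscOfConvergence.remainderCoeff (h : InDiscOfConvergence c x) (hx : x ≠ 0)
    (p q : ℚ[X]) : InDiscOfConvergence (remainderCoeff c p q) x :=
  (h.polyMulCoeff hx q).sub (inDiscOfConvergence_polyCoeffZinv p x)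

theorem mahlerValue_remainderCoeff (h : InDiscOfConvergence c x) (hx : x ≠ 0) (p q : ℚ[X]) :
    mahlerValue (remainderCoeff c p q) x = aeval x q * mahlerValue c x - aeval x p := by
  rw [← mahlerValue_polyMulCoeff h hx, ← mahlerValue_polyCoeffZinv p x]
  exact mahlerValue_sub (h.polyMulCoeff hx q) (inDiscOfConvergence_polyCoeffZinv p x)

theorem aeval_mul_mahlerValue_sub_aeval (h : InDiscOfConvergence c x) (hx : x ≠ 0)
    (p q : ℚ[X]) (e : ℤ) :
    aeval x q * mahlerValue c x - aeval x p
      = x ^ (-e) * mahlerValue (fun i => remainderCoeff c p q (i + e)) x := by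
  rw [mahlerValue_shift hx, ← mul_assoc, ← zpow_add₀ hx, neg_add_cancel, zpow_zero, one_mul,
    mahlerValue_remainderCoeff h hx]

end Remainder

section LeadingTerm

variable (P : ℚ[X]) {x : ℝ}

theorem abs_aeval_sub_leading_mul_le (hx : 1 ≤ |x|) :
    |aeval x P - P.leadingCoeff * x ^ P.natDegree| * |x|
      ≤ (∑ j ∈ range P.natDegree, |(P.coeff j : ℝ)|) * |x| ^ P.natDegree := by
  rw [aeval_eq_sum_range, sum_range_succ, coeff_natDegree, Algebra.smul_def, eq_ratCast,
    add_sub_cancel_right, sum_mul]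
  refine (mul_le_mul_of_nonneg_right (abs_sum_le_sum_abs _ _) (abs_nonneg x)).trans ?_
  rw [sum_mul]
  refine sum_le_sum fun j hj => ?_
  rw [Algebra.smul_def, eq_ratCast, abs_mul, abs_pow, mul_assoc, ← pow_succ]
  exact mul_le_mul_of_nonneg_left (pow_le_pow_right₀ hx (mem_range.1 hj)) (abs_nonneg _)

variable {P}

theorem abs_abs_aeval_div_sub_one_le (hP : P ≠ 0) (hx : 1 ≤ |x|) :
    |(|aeval x P| / (|(P.leadingCoeff : ℝ)| * |x| ^ P.natDegree) - 1)|
      ≤ (∑ j ∈ range P.natDegree, |(P.coeff j : ℝ)|) / |(P.leadingCoeff : ℝ)| * |x|⁻¹ := by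
  have hlc : 0 < |(P.leadingCoeff : ℝ)| := by simpa using leadingCoeff_ne_zero.2 hP
  have hx0 : 0 < |x| := one_pos.trans_le hx
  have hD : 0 < |(P.leadingCoeff : ℝ)| * |x| ^ P.natDegree := by positivity
  have hlead : |(P.leadingCoeff : ℝ)| * |x| ^ P.natDegree = |P.leadingCoeff * x ^ P.natDegree| := by
    rw [abs_mul, abs_pow]
  rw [div_sub_one hD.ne', abs_div, abs_of_pos hD, div_le_iff₀ hD, hlead]
  refine (abs_abs_sub_abs_le_abs_sub _ _).trans ?_
  refine ((le_div_iff₀ hx0).2 (abs_aeval_sub_leading_mul_le P hx)).trans_eq ?_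
  rw [← hlead]
  field_simp

theorem tendsto_abs_aeval_div_cobounded (hP : P ≠ 0) :
    Tendsto (fun x : ℝ => |aeval x P| / (|(P.leadingCoeff : ℝ)| * |x| ^ P.natDegree))
      (cobounded ℝ) (𝓝 1) := by
  set K := (∑ j ∈ range P.natDegree, |(P.coeff j : ℝ)|) / |(P.leadingCoeff : ℝ)|
  refine tendsto_iff_norm_sub_tendsto_zero.2 (squeeze_zero' (.of_forall fun _ => norm_nonneg _)
    ?_ (by simpa using (tendsto_inv₀_cobounded (α := ℝ)).norm.const_mul K))
  filter_upwards [eventually_cobounded_le_norm (1 : ℝ)] with x hx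
  simpa only [Real.norm_eq_abs, abs_inv] using abs_abs_aeval_div_sub_one_le hP hx

theorem summable_abs_aeval_div_sub_one (hP : P ≠ 0) {b : ℝ} (hb : 1 < |b|) {d : ℕ} (hd : 2 ≤ d) :
    Summable fun t : ℕ =>
      |aeval (b ^ d ^ t) P| / (|(P.leadingCoeff : ℝ)| * |b ^ d ^ t| ^ P.natDegree) - 1 := by
  set K := (∑ j ∈ range P.natDegree, |(P.coeff j : ℝ)|) / |(P.leadingCoeff : ℝ)|
  have hr : |b|⁻¹ < 1 := inv_lt_one_of_one_lt₀ hb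
  refine Summable.of_norm_bounded ((summable_geometric_of_lt_one (by positivity) hr).mul_left K)
    fun t => ?_
  have hx : 1 ≤ |b ^ d ^ t| := by rw [abs_pow]; exact one_le_pow₀ hb.le
  refine (abs_abs_aeval_div_sub_one_le hP hx).trans (mul_le_mul_of_nonneg_left ?_ (by positivity))
  rw [abs_pow, ← inv_pow]
  exact pow_le_pow_of_le_one (by positivity) hr.le (Nat.lt_pow_self hd).le

end LeadingTerm

theorem exists_pos_tendsto_prod_range {u : ℕ → ℝ} (hpos : ∀ t, 0 < u t)
    (hsum : Summable fun t => u t - 1) :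
    ∃ L, 0 < L ∧ Tendsto (fun m => ∏ t ∈ range m, u t) atTop (𝓝 L) := by
  have hlog : Summable fun t => Real.log (u t) := by
    simpa using Real.summable_log_one_add_of_summable hsum
  refine ⟨∏' t, u t, ?_, (Real.multipliable_of_summable_log hpos hlog).hasProd.tendsto_prod_nat⟩
  rw [← Real.rexp_tsum_eq_tprod hpos hlog]
  exact Real.exp_pos _

section Asymptotics

variable {b : ℝ} {d : ℕ}

theorem abs_rpow_pow_mul (b : ℝ) (d m : ℕ) (k : ℝ) :
    |b| ^ ((d : ℝ) ^ m * k) = |b ^ d ^ m| ^ k := by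
  rw [Real.rpow_mul (abs_nonneg b), abs_pow, ← Real.rpow_natCast |b| (d ^ m)]
  push_cast
  rfl

theorem rpow_geom_exponent {a : ℝ} (ha : 0 < a) (hd : 2 ≤ d) (r m : ℕ) (k : ℝ) :
    a ^ ((d : ℝ) ^ m * ((r : ℝ) / ((d : ℝ) - 1) + k))
      = a ^ ((r : ℝ) / ((d : ℝ) - 1)) * a ^ (∑ t ∈ range m, d ^ t * r) * a ^ ((d : ℝ) ^ m * k) := by
  have hd1 : (d : ℝ) ≠ 1 := by norm_cast; omega
  rw [← Real.rpow_natCast a (∑ t ∈ range m, d ^ t * r), ← Real.rpow_add ha, ← Real.rpow_add ha]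
  congr 1
  push_cast
  rw [← sum_mul, geom_sum_eq hd1]
  field_simp [sub_ne_zero.2 hd1]
  ring

theorem tendsto_pow_pow_cobounded (hb : 1 < |b|) (hd : 2 ≤ d) :
    Tendsto (fun m : ℕ => b ^ d ^ m) atTop (cobounded ℝ) := by
  refine tendsto_norm_atTop_iff_cobounded.1 ?_
  simpa only [norm_pow, Real.norm_eq_abs, Function.comp_def] using
    (tendsto_pow_atTop_atTop_of_one_lt hb).comp (tendsto_pow_atTop_atTop_of_one_lt (α := ℕ) hd)

theorem exists_pos_tendsto_prod_mul_div {P : ℚ[X]} (hP : P ≠ 0) (hb : 1 < |b|) (hd : 2 ≤ d)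
    (hP0 : ∀ t, aeval (b ^ d ^ t) P ≠ 0) {w : ℕ → ℝ} {k W : ℝ}
    (hw : Tendsto (fun m => w m / |b| ^ ((d : ℝ) ^ m * k)) atTop (𝓝 W)) :
    ∃ L, 0 < L ∧ Tendsto (fun m => (∏ t ∈ range m, |aeval (b ^ d ^ t) P|) * w m
      / (|(P.leadingCoeff : ℝ)| ^ m
        * |b| ^ ((d : ℝ) ^ m * ((P.natDegree : ℝ) / ((d : ℝ) - 1) + k)))) atTop (𝓝 (L * W)) := by
  have hb0 : 0 < |b| := one_pos.trans hb
  have hx : ∀ t, 0 < |b ^ d ^ t| ^ P.natDegree := fun t => by rw [abs_pow]; positivity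
  have hlc : 0 < |(P.leadingCoeff : ℝ)| := by simpa using leadingCoeff_ne_zero.2 hP
  set u := fun t : ℕ =>
    |aeval (b ^ d ^ t) P| / (|(P.leadingCoeff : ℝ)| * |b ^ d ^ t| ^ P.natDegree)
  have hu : ∀ t, 0 < u t := fun t => div_pos (abs_pos.2 (hP0 t)) (mul_pos hlc (hx t))
  obtain ⟨L, hL, hprod⟩ :=
    exists_pos_tendsto_prod_range hu (summable_abs_aeval_div_sub_one hP hb hd)
  have hsplit : ∀ m, ∏ t ∈ range m, |aeval (b ^ d ^ t) P|
      = (∏ t ∈ range m, u t)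
        * (|(P.leadingCoeff : ℝ)| ^ m * |b| ^ (∑ t ∈ range m, d ^ t * P.natDegree)) := by
    intro m
    rw [← card_range m, ← prod_const, ← prod_pow_eq_pow_sum, card_range, ← prod_mul_distrib,
      ← prod_mul_distrib]
    refine prod_congr rfl fun t _ => ?_
    rw [pow_mul, ← abs_pow]
    exact (div_mul_cancel₀ _ (mul_pos hlc (hx t)).ne').symm
  refine ⟨L / |b| ^ ((P.natDegree : ℝ) / ((d : ℝ) - 1)), by positivity, ?_⟩
  rw [div_mul_eq_mul_div]
  refine ((hprod.mul hw).div_const _).congr fun m => ?_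
  rw [hsplit, rpow_geom_exponent hb0 hd]
  field_simp

end Asymptotics

theorem exists_pos_tendsto_denominator_ratio {d : ℕ} (hd : 2 ≤ d) {B : ℚ[X]} (hB : B ≠ 0)
    {b : ℝ} (hb : 1 < |b|) (hB0 : ∀ t, aeval (b ^ d ^ t) B ≠ 0) {q : ℚ[X]} (hq : q ≠ 0) :
    ∃ L, 0 < L ∧ Tendsto (fun m => |(∏ t ∈ range m, aeval (b ^ d ^ t) B) * aeval (b ^ d ^ m) q|
      / (|(B.leadingCoeff : ℝ)| ^ m
        * |b| ^ ((d : ℝ) ^ m * ((B.natDegree : ℝ) / ((d : ℝ) - 1) + (q.natDegree : ℝ)))))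
      atTop (𝓝 L) := by
  have hlc : 0 < |(q.leadingCoeff : ℝ)| := by simpa using leadingCoeff_ne_zero.2 hq
  have hw : Tendsto (fun m => |aeval (b ^ d ^ m) q| / |b| ^ ((d : ℝ) ^ m * q.natDegree)) atTop
      (𝓝 |(q.leadingCoeff : ℝ)|) := by
    have := ((tendsto_abs_aeval_div_cobounded hq).comp (tendsto_pow_pow_cobounded hb hd)).const_mul
      |(q.leadingCoeff : ℝ)|
    rw [mul_one] at this
    refine this.congr fun m => ?_
    rw [abs_rpow_pow_mul, Real.rpow_natCast, Function.comp_apply]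
    field_simp
  obtain ⟨L, hL, h⟩ := exists_pos_tendsto_prod_mul_div hB hb hd hB0 hw
  exact ⟨L * |(q.leadingCoeff : ℝ)|, by positivity, by simpa [abs_mul, abs_prod] using h⟩

theorem exists_pos_tendsto_remainder_ratio {d : ℕ} (hd : 2 ≤ d) {A B : ℚ[X]} (hA : A ≠ 0)
    {c : ℤ → ℚ} (hc : IsLaurentSupport c) (hfeq : MahlerEq d A B c) {b : ℝ} (hb : 1 < |b|)
    (hbconv : InDiscOfConvergence c b) (hA0 : ∀ t, aeval (b ^ d ^ t) A ≠ 0) {p q : ℚ[X]} {e : ℕ}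
    (horder : ∀ i : ℤ, i < e → polyMulCoeff q c i = polyCoeffZinv p i)
    (hexact : polyMulCoeff q c e ≠ polyCoeffZinv p e) :
    ∃ L, 0 < L ∧ Tendsto (fun m =>
      |(∏ t ∈ range m, aeval (b ^ d ^ t) B) * aeval (b ^ d ^ m) q * mahlerValue c b
        - (∏ t ∈ range m, aeval (b ^ d ^ t) A) * aeval (b ^ d ^ m) p|
      / (|(A.leadingCoeff : ℝ)| ^ m
        * |b| ^ ((d : ℝ) ^ m * ((A.natDegree : ℝ) / ((d : ℝ) - 1) - (e : ℝ)))))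
      atTop (𝓝 L) := by
  have hb0 : b ≠ 0 := abs_pos.1 (one_pos.trans hb)
  set r := fun i => remainderCoeff c p q (i + e)
  have hr0 : ∀ i < 0, r i = 0 := fun i hi => sub_eq_zero.2 (horder _ (by omega))
  have hre : 0 < |(r 0 : ℝ)| := by simpa [r, remainderCoeff, sub_eq_zero] using hexact
  have hS : Tendsto (fun m => |mahlerValue r (b ^ d ^ m)|) atTop (𝓝 |(r 0 : ℝ)|) :=
    ((tendsto_mahlerValue_cobounded hr0 hb0 ((hbconv.remainderCoeff hb0 p q).shift hb0 e)).comp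
      (tendsto_pow_pow_cobounded hb hd)).abs
  have hw : Tendsto (fun m => |(b ^ d ^ m) ^ (-(e : ℤ))| * |mahlerValue r (b ^ d ^ m)|
      / |b| ^ ((d : ℝ) ^ m * -(e : ℝ))) atTop (𝓝 |(r 0 : ℝ)|) := by
    refine hS.congr fun m => ?_
    rw [abs_rpow_pow_mul, Real.rpow_neg (abs_nonneg _), Real.rpow_natCast, zpow_neg, abs_inv,
      zpow_natCast, abs_pow]
    field_simp
  obtain ⟨L, hL, h⟩ := exists_pos_tendsto_prod_mul_div hA hb hd hA0 hw
  refine ⟨L * |(r 0 : ℝ)|, by positivity, (h.congr fun m => ?_)⟩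
  have hx := hbconv.pow hc hb.le (pow_ne_zero m (by omega : d ≠ 0))
  have hiter := mahlerValue_mul_prod_of_mahlerEq hfeq (by omega) hc hb.le hbconv m
  have hnum : (∏ t ∈ range m, aeval (b ^ d ^ t) B) * aeval (b ^ d ^ m) q * mahlerValue c b
      - (∏ t ∈ range m, aeval (b ^ d ^ t) A) * aeval (b ^ d ^ m) p
      = (∏ t ∈ range m, aeval (b ^ d ^ t) A)
        * (aeval (b ^ d ^ m) q * mahlerValue c (b ^ d ^ m) - aeval (b ^ d ^ m) p) := by
    linear_combination aeval (b ^ d ^ m) q * hiter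
  rw [hnum, aeval_mul_mahlerValue_sub_aeval hx (pow_ne_zero _ hb0) p q e, abs_mul, abs_mul,
    abs_prod, ← sub_eq_add_neg]

theorem eventually_mem_Icc_of_tendsto {u : ℕ → ℝ} {L : ℝ} (hL : 0 < L)
    (h : Tendsto u atTop (𝓝 L)) : ∀ᶠ m in atTop, u m ∈ Set.Icc (L / 2) (2 * L) :=
  h.eventually (Icc_mem_nhds (by linarith) (by linarith))

theorem statement7_general
    (d : ℕ) (hd : 2 ≤ d)
    (A B : Polynomial ℚ) (hA : A ≠ 0) (hB : B ≠ 0)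
    (c : ℤ → ℚ) (hc : IsLaurentSupport c)
    (hfeq : MahlerEq d A B c)
    (b : ℝ) (hb : 1 < |b|)
    (hbconv : InDiscOfConvergence c b)
    (hAB0 : ∀ t : ℕ, (Polynomial.aeval (b ^ d ^ t)) A * (Polynomial.aeval (b ^ d ^ t)) B ≠ 0)
    (p q : Polynomial ℚ) (e : ℕ)
    (hconv : IsConvergentWithOrder c p q (e : ℤ)) :
    ∃ c₁ c₂ c₃ c₄ : ℝ, 0 < c₁ ∧ 0 < c₂ ∧ 0 < c₃ ∧ 0 < c₄ ∧ ∃ M : ℕ, ∀ m ≥ M,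
      (c₁ ≤ |(∏ t ∈ Finset.range m, (Polynomial.aeval (b ^ d ^ t)) B)
              * (Polynomial.aeval (b ^ d ^ m)) q|
            / ((|(B.leadingCoeff : ℝ)|) ^ m
               * |b| ^ ((d : ℝ) ^ m * ((B.natDegree : ℝ) / ((d : ℝ) - 1) + (q.natDegree : ℝ))))
        ∧ |(∏ t ∈ Finset.range m, (Polynomial.aeval (b ^ d ^ t)) B)
              * (Polynomial.aeval (b ^ d ^ m)) q|
            / ((|(B.leadingCoeff : ℝ)|) ^ m
               * |b| ^ ((d : ℝ) ^ m * ((B.natDegree : ℝ) / ((d : ℝ) - 1) + (q.natDegree : ℝ))))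
          ≤ c₂)
      ∧
      (c₃ ≤ |(∏ t ∈ Finset.range m, (Polynomial.aeval (b ^ d ^ t)) B)
              * (Polynomial.aeval (b ^ d ^ m)) q * mahlerValue c b
             - (∏ t ∈ Finset.range m, (Polynomial.aeval (b ^ d ^ t)) A)
              * (Polynomial.aeval (b ^ d ^ m)) p|
            / ((|(A.leadingCoeff : ℝ)|) ^ m
               * |b| ^ ((d : ℝ) ^ m * ((A.natDegree : ℝ) / ((d : ℝ) - 1) - (e : ℝ))))
        ∧ |(∏ t ∈ Finset.range m, (Polynomial.aeval (b ^ d ^ t)) B)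
              * (Polynomial.aeval (b ^ d ^ m)) q * mahlerValue c b
             - (∏ t ∈ Finset.range m, (Polynomial.aeval (b ^ d ^ t)) A)
              * (Polynomial.aeval (b ^ d ^ m)) p|
            / ((|(A.leadingCoeff : ℝ)|) ^ m
               * |b| ^ ((d : ℝ) ^ m * ((A.natDegree : ℝ) / ((d : ℝ) - 1) - (e : ℝ))))
          ≤ c₄) := by
  obtain ⟨-, hq, -, horder, hexact⟩ := hconv
  obtain ⟨L₁, hL₁, h₁⟩ := exists_pos_tendsto_denominator_ratio hd hB hb
    (fun t => right_ne_zero_of_mul (hAB0 t)) hq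
  obtain ⟨L₂, hL₂, h₂⟩ := exists_pos_tendsto_remainder_ratio hd hA hc hfeq hb hbconv
    (fun t => left_ne_zero_of_mul (hAB0 t)) horder hexact
  obtain ⟨M, hM⟩ := ((eventually_mem_Icc_of_tendsto hL₁ h₁).and
    (eventually_mem_Icc_of_tendsto hL₂ h₂)).exists_forall_of_atTop
  exact ⟨L₁ / 2, 2 * L₁, L₂ / 2, 2 * L₂, by positivity, by positivity, by positivity,
    by positivity, M, hM⟩

/-- **Lemma 4.** Let `d ≥ 2`, `A, B ∈ ℚ[X]` nonzero coprime with degrees `r_a, r_b` and leading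
coefficients `α, β`, and let `f ∈ ℚ((z⁻¹))` be a non-rational solution of `B(z)f(z) = A(z)f(z^d)`.
Let `p/q` be a convergent of `f` with `d_k = deg q` and error order `e = d_{k+1}`, and set
`q_{k,m}(z) = ∏_{t<m} B(z^{d^t})·q(z^{d^m})`, `p_{k,m}(z) = ∏_{t<m} A(z^{d^t})·p(z^{d^m})`.
If `b ∈ ℝ`, `|b| > 1`, lies inside the disc of convergence of `f` and `A(b^{d^t})·B(b^{d^t}) ≠ 0`
for all `t ≥ 0`, then for all large `m`:
`|q_{k,m}(b)| ≍ |β|^m·|b|^{d^m(r_b/(d-1) + d_k)}` and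
`|q_{k,m}(b)f(b) - p_{k,m}(b)| ≍ |α|^m·|b|^{d^m(r_a/(d-1) - d_{k+1})}`,
with implied constants independent of `m`. -/
theorem statement7
    (d : ℕ) (hd : 2 ≤ d)
    (A B : Polynomial ℚ) (hA : A ≠ 0) (hB : B ≠ 0) (hAB : IsCoprime A B)
    (c : ℤ → ℚ) (hc : IsLaurentSupport c)
    (hfeq : MahlerEq d A B c)
    (hnotrat : ¬ IsRationalFun c)
    (b : ℝ) (hb : 1 < |b|)
    (hbconv : InDiscOfConvergence c b)
    (hAB0 : ∀ t : ℕ, (Polynomial.aeval (b ^ d ^ t)) A * (Polynomial.aeval (b ^ d ^ t)) B ≠ 0)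
    (p q : Polynomial ℚ) (e : ℕ)
    (hconv : IsConvergentWithOrder c p q (e : ℤ)) :
    ∃ c₁ c₂ c₃ c₄ : ℝ, 0 < c₁ ∧ 0 < c₂ ∧ 0 < c₃ ∧ 0 < c₄ ∧ ∃ M : ℕ, ∀ m ≥ M,
      (c₁ ≤ |(∏ t ∈ Finset.range m, (Polynomial.aeval (b ^ d ^ t)) B)
              * (Polynomial.aeval (b ^ d ^ m)) q|
            / ((|(B.leadingCoeff : ℝ)|) ^ m
               * |b| ^ ((d : ℝ) ^ m * ((B.natDegree : ℝ) / ((d : ℝ) - 1) + (q.natDegree : ℝ))))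
        ∧ |(∏ t ∈ Finset.range m, (Polynomial.aeval (b ^ d ^ t)) B)
              * (Polynomial.aeval (b ^ d ^ m)) q|
            / ((|(B.leadingCoeff : ℝ)|) ^ m
               * |b| ^ ((d : ℝ) ^ m * ((B.natDegree : ℝ) / ((d : ℝ) - 1) + (q.natDegree : ℝ))))
          ≤ c₂)
      ∧
      (c₃ ≤ |(∏ t ∈ Finset.range m, (Polynomial.aeval (b ^ d ^ t)) B)
              * (Polynomial.aeval (b ^ d ^ m)) q * mahlerValue c b
             - (∏ t ∈ Finset.range m, (Polynomial.aeval (b ^ d ^ t)) A)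
              * (Polynomial.aeval (b ^ d ^ m)) p|
            / ((|(A.leadingCoeff : ℝ)|) ^ m
               * |b| ^ ((d : ℝ) ^ m * ((A.natDegree : ℝ) / ((d : ℝ) - 1) - (e : ℝ))))
        ∧ |(∏ t ∈ Finset.range m, (Polynomial.aeval (b ^ d ^ t)) B)
              * (Polynomial.aeval (b ^ d ^ m)) q * mahlerValue c b
             - (∏ t ∈ Finset.range m, (Polynomial.aeval (b ^ d ^ t)) A)
              * (Polynomial.aeval (b ^ d ^ m)) p|
            / ((|(A.leadingCoeff : ℝ)|) ^ m
               * |b| ^ ((d : ℝ) ^ m * ((A.natDegree : ℝ) / ((d : ℝ) - 1) - (e : ℝ))))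
          ≤ c₄) :=
  statement7_general d hd A B hA hB c hc hfeq b hb hbconv hAB0 p q e hconv
end

section
/- Let d ≥ 2 be an integer, A, B ∈ ℚ[X] nonzero coprime polynomials of degrees r_a, r_b, and let f ∈ ℚ((z^{−1})) be a non-rational formal Laurent series satisfying B(z)f(z) = A(z)f(z^d). Let [u,v] be a big gap in Φ(f) (i.e. v − u > (r_a + r_b)/(d − 1)) with gap's convergent p_u/q_u. Then the reduced form of A(z)·p_u(z^d)/(B(z)·q_u(z^d)) is again a convergent of f, and the gap in Φ(f) corresponding to this convergent has size strictly greater than v − u; explicitly, writing r_c = deg gcd(A(z)p_u(z^d), B(z)q_u(z^d)), this gap is [d·u + r_b − r_c, d·v − r_a + r_c]. -/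
open Polynomial Filter

namespace St9

lemma pmc_eq_sum (P : Polynomial ℚ) (c : ℤ → ℚ) (i : ℤ) {N : ℕ} (hN : P.natDegree < N) :
    polyMulCoeff P c i = ∑ j ∈ Finset.range N, P.coeff j * c (i + j) := by
  unfold polyMulCoeff
  refine Finset.sum_subset (Finset.range_subset_range.2 hN) ?_
  intro j hj hj'
  simp only [Finset.mem_range, not_lt] at hj'
  rw [P.coeff_eq_zero_of_natDegree_lt (by omega), zero_mul]

lemma pmc_congr (P : Polynomial ℚ) {c1 c2 : ℤ → ℚ} (h : ∀ j, c1 j = c2 j) (i : ℤ) :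
    polyMulCoeff P c1 i = polyMulCoeff P c2 i := by
  unfold polyMulCoeff; exact Finset.sum_congr rfl (fun j _ => by rw [h])

lemma pmc_add_P (P Q : Polynomial ℚ) (c : ℤ → ℚ) (i : ℤ) :
    polyMulCoeff (P + Q) c i = polyMulCoeff P c i + polyMulCoeff Q c i := by
  set N := max P.natDegree Q.natDegree + 1 with hNdef
  rw [pmc_eq_sum _ _ _ (N := N) (Nat.lt_succ_of_le ((natDegree_add_le P Q))),
      pmc_eq_sum P _ _ (N := N) (Nat.lt_succ_of_le (le_max_left _ _)),
      pmc_eq_sum Q _ _ (N := N) (Nat.lt_succ_of_le (le_max_right _ _)),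
      ← Finset.sum_add_distrib]
  exact Finset.sum_congr rfl (fun j _ => by rw [coeff_add]; ring)

lemma pmc_sub_c (P : Polynomial ℚ) (c1 c2 : ℤ → ℚ) (i : ℤ) :
    polyMulCoeff P (fun j => c1 j - c2 j) i = polyMulCoeff P c1 i - polyMulCoeff P c2 i := by
  unfold polyMulCoeff
  rw [← Finset.sum_sub_distrib]
  exact Finset.sum_congr rfl (fun j _ => by ring)

lemma pmc_monomial (n : ℕ) (a : ℚ) (c : ℤ → ℚ) (i : ℤ) :
    polyMulCoeff (monomial n a) c i = a * c (i + n) := by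
  by_cases ha : a = 0
  · simp [ha, polyMulCoeff]
  · rw [pmc_eq_sum _ _ _ (N := n+1) (by rw [natDegree_monomial_eq n ha]; omega)]
    rw [Finset.sum_eq_single n]
    · simp [coeff_monomial]
    · intro b _ hb; simp [coeff_monomial, hb, Ne.symm hb]
    · intro h; simp at h

end St9

namespace St9b
open St9

lemma pmc_monomial_mul (n : ℕ) (a : ℚ) (Q : Polynomial ℚ) (c : ℤ → ℚ) (i : ℤ) :
    polyMulCoeff (monomial n a * Q) c i = a * polyMulCoeff Q c (i + n) := by
  have hco : ∀ j : ℕ, (monomial n a * Q).coeff j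
      = a * (if n ≤ j then Q.coeff (j - n) else 0) := by
    intro j
    have : monomial n a * Q = Q * C a * X ^ n := by
      rw [← C_mul_X_pow_eq_monomial]; ring
    rw [this, coeff_mul_X_pow', coeff_mul_C]
    split <;> ring
  have hd : (monomial n a * Q).natDegree < n + (Q.natDegree + 1) := by
    have := natDegree_mul_le (p := monomial n a) (q := Q)
    have h2 : (monomial n a).natDegree ≤ n := natDegree_monomial_le a
    omega
  rw [pmc_eq_sum _ _ _ hd, Finset.sum_range_add]
  have h1 : ∑ j ∈ Finset.range n, (monomial n a * Q).coeff j * c (i + j) = 0 := by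
    refine Finset.sum_eq_zero fun j hj => ?_
    rw [hco]
    simp only [Finset.mem_range] at hj
    rw [if_neg (by omega)]
    ring
  rw [h1, zero_add, pmc_eq_sum _ _ _ (N := Q.natDegree + 1) (Nat.lt_succ_self _),
    Finset.mul_sum]
  refine Finset.sum_congr rfl fun k _ => ?_
  rw [hco, if_pos (by omega)]
  have : n + k - n = k := by omega
  rw [this]
  have : i + ↑(n + k) = i + ↑n + ↑k := by push_cast; ring
  rw [this]
  ring

lemma pmc_mul (P Q : Polynomial ℚ) (c : ℤ → ℚ) (i : ℤ) :
    polyMulCoeff (P * Q) c i = polyMulCoeff P (fun j => polyMulCoeff Q c j) i := by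
  induction P using Polynomial.induction_on' with
  | add p q hp hq => rw [add_mul, pmc_add_P, pmc_add_P, hp, hq]
  | monomial n a => rw [pmc_monomial_mul, pmc_monomial]

lemma pmc_comm (P Q : Polynomial ℚ) (c : ℤ → ℚ) (i : ℤ) :
    polyMulCoeff P (fun j => polyMulCoeff Q c j) i
      = polyMulCoeff Q (fun j => polyMulCoeff P c j) i := by
  rw [← pmc_mul, mul_comm, pmc_mul]

lemma pcz_add (p q : Polynomial ℚ) (i : ℤ) :
    polyCoeffZinv (p + q) i = polyCoeffZinv p i + polyCoeffZinv q i := by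
  unfold polyCoeffZinv
  split <;> simp

lemma pcz_mul (P p : Polynomial ℚ) (i : ℤ) :
    polyCoeffZinv (P * p) i = polyMulCoeff P (fun j => polyCoeffZinv p j) i := by
  induction P using Polynomial.induction_on' with
  | add r s hr hs => rw [add_mul, pcz_add, pmc_add_P, hr, hs]
  | monomial n a =>
    rw [pmc_monomial]
    unfold polyCoeffZinv
    have hco : ∀ j : ℕ, (monomial n a * p).coeff j
        = a * (if n ≤ j then p.coeff (j - n) else 0) := by
      intro j
      have : monomial n a * p = p * C a * X ^ n := by
        rw [← C_mul_X_pow_eq_monomial]; ring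
      rw [this, coeff_mul_X_pow', coeff_mul_C]
      split <;> ring
    by_cases hi : i ≤ 0
    · rw [if_pos hi, hco]
      by_cases hin : i + n ≤ 0
      · rw [if_pos hin, if_pos (by omega)]
        congr 2
        omega
      · rw [if_neg hin, if_neg (by omega)]
    · rw [if_neg hi, if_neg (by omega)]
      ring

lemma pcz_comp_pow (d : ℕ) (hd : 0 < d) (p : Polynomial ℚ) (i : ℤ) :
    polyCoeffZinv (p.comp (X ^ d)) i = substPowCoeff d (fun j => polyCoeffZinv p j) i := by
  induction p using Polynomial.induction_on' with
  | add r s hr hs =>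
    rw [add_comp, pcz_add]
    rw [hr, hs]
    unfold substPowCoeff
    split <;> simp [pcz_add]
  | monomial n a =>
    have hcomp : (monomial n a).comp (X ^ d) = monomial (d * n) a := by
      rw [← C_mul_X_pow_eq_monomial, mul_comp, C_comp, X_pow_comp, ← pow_mul,
        C_mul_X_pow_eq_monomial, Nat.mul_comm]
    have pcz_monomial : ∀ (m : ℕ) (j : ℤ),
        polyCoeffZinv (monomial m a) j = if j + m = 0 then a else 0 := by
      intro m j
      unfold polyCoeffZinv
      rcases le_or_gt j 0 with hj | hj
      · rw [if_pos hj, coeff_monomial]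
        by_cases h : j + m = 0
        · rw [if_pos (by omega), if_pos h]
        · rw [if_neg (by omega), if_neg h]
      · rw [if_neg (by omega), if_neg (by omega)]
    rw [hcomp, pcz_monomial]
    unfold substPowCoeff
    have hd0 : (d : ℤ) ≠ 0 := by exact_mod_cast hd.ne'
    by_cases h : i + (d * n : ℕ) = 0
    · have hdvd : (d : ℤ) ∣ i := ⟨-(n : ℤ), by push_cast at h ⊢; linarith⟩
      have hio : i / (d : ℤ) = -(n : ℤ) := by
        have : i = (d : ℤ) * (-(n : ℤ)) := by push_cast at h ⊢; linarith
        rw [this, Int.mul_ediv_cancel_left _ hd0]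
      rw [if_pos h, if_pos hdvd]
      simp only [pcz_monomial, hio]
      rw [if_pos (by omega)]
    · rw [if_neg h]
      by_cases hdvd : (d : ℤ) ∣ i
      · obtain ⟨k, hk⟩ := hdvd
        have hio : i / (d : ℤ) = k := by rw [hk, Int.mul_ediv_cancel_left _ hd0]
        rw [if_pos ⟨k, hk⟩]
        simp only [pcz_monomial, hio]
        rw [if_neg ?_]
        intro hkn
        apply h
        push_cast
        rw [hk]
        push_cast at hkn
        nlinarith [hkn]
      · rw [if_neg hdvd]

lemma spc_congr (d : ℕ) {c1 c2 : ℤ → ℚ} (h : ∀ j, c1 j = c2 j) (i : ℤ) :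
    substPowCoeff d c1 i = substPowCoeff d c2 i := by
  unfold substPowCoeff; split <;> simp [h]

lemma pmc_comp_pow (d : ℕ) (hd : 0 < d) (q : Polynomial ℚ) (c : ℤ → ℚ) (i : ℤ) :
    polyMulCoeff (q.comp (X ^ d)) (substPowCoeff d c) i
      = substPowCoeff d (fun j => polyMulCoeff q c j) i := by
  have hd0 : (d : ℤ) ≠ 0 := by exact_mod_cast hd.ne'
  induction q using Polynomial.induction_on' with
  | add r s hr hs =>
    rw [add_comp, pmc_add_P, hr, hs]
    rw [spc_congr d (fun j => pmc_add_P r s c j)]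
    unfold substPowCoeff
    split <;> simp
  | monomial n a =>
    have hcomp : (monomial n a).comp (X ^ d) = monomial (d * n) a := by
      rw [← C_mul_X_pow_eq_monomial, mul_comp, C_comp, X_pow_comp, ← pow_mul,
        C_mul_X_pow_eq_monomial, Nat.mul_comm]
    rw [hcomp, pmc_monomial,
      spc_congr d (fun j => pmc_monomial n a c j)]
    unfold substPowCoeff
    by_cases hdvd : (d : ℤ) ∣ i
    · obtain ⟨k, hk⟩ := hdvd
      have h1 : (d : ℤ) ∣ i + (d * n : ℕ) := ⟨k + n, by push_cast; rw [hk]; ring⟩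
      have h2 : (i + (d * n : ℕ)) / (d : ℤ) = k + n := by
        have : i + ((d : ℕ) * n : ℕ) = (d : ℤ) * (k + n) := by push_cast; rw [hk]; ring
        rw [this, Int.mul_ediv_cancel_left _ hd0]
      have h3 : i / (d : ℤ) = k := by rw [hk, Int.mul_ediv_cancel_left _ hd0]
      rw [if_pos h1, if_pos ⟨k, hk⟩, h2, h3]
    · have h1 : ¬ (d : ℤ) ∣ i + (d * n : ℕ) := by
        intro ⟨k, hk⟩
        exact hdvd ⟨k - n, by push_cast at hk ⊢; linarith⟩
      rw [if_neg h1, if_neg hdvd, mul_zero]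

lemma pmc_order_vanish {P : Polynomial ℚ} {g : ℤ → ℚ} {m : ℤ} (hg : ∀ i < m, g i = 0)
    {i : ℤ} (hi : i < m - P.natDegree) : polyMulCoeff P g i = 0 := by
  unfold polyMulCoeff
  refine Finset.sum_eq_zero fun j hj => ?_
  simp only [Finset.mem_range] at hj
  rw [hg (i + j) (by omega), mul_zero]

lemma pmc_order_lead {P : Polynomial ℚ} {g : ℤ → ℚ} {m : ℤ} (hg : ∀ i < m, g i = 0) :
    polyMulCoeff P g (m - P.natDegree) = P.leadingCoeff * g m := by
  unfold polyMulCoeff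
  rw [Finset.sum_eq_single P.natDegree]
  · rw [leadingCoeff]
    congr 1
    congr 1
    omega
  · intro j hj hne
    simp only [Finset.mem_range] at hj
    rw [hg (m - P.natDegree + j) (by omega), mul_zero]
  · intro h
    simp at h

lemma spc_order_vanish (d : ℕ) (hd : 0 < d) {g : ℤ → ℚ} {m : ℤ} (hg : ∀ i < m, g i = 0)
    {i : ℤ} (hi : i < d * m) : substPowCoeff d g i = 0 := by
  unfold substPowCoeff
  rcases em ((d : ℤ) ∣ i) with ⟨k, hk⟩ | h
  · rw [if_pos ⟨k, hk⟩]
    have hd0 : (d : ℤ) ≠ 0 := by exact_mod_cast hd.ne'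
    have h3 : i / (d : ℤ) = k := by rw [hk, Int.mul_ediv_cancel_left _ hd0]
    rw [h3]
    apply hg
    by_contra hkm
    push_neg at hkm
    have : (d : ℤ) * m ≤ (d:ℤ) * k := by
      apply mul_le_mul_of_nonneg_left hkm (by positivity)
    omega
  · rw [if_neg h]

lemma spc_order_lead (d : ℕ) (hd : 0 < d) (g : ℤ → ℚ) (m : ℤ) :
    substPowCoeff d g (d * m) = g m := by
  unfold substPowCoeff
  have hd0 : (d : ℤ) ≠ 0 := by exact_mod_cast hd.ne'
  rw [if_pos ⟨m, rfl⟩, Int.mul_ediv_cancel_left _ hd0]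

lemma ils_pmc {c : ℤ → ℚ} (hc : IsLaurentSupport c) (P : Polynomial ℚ) :
    IsLaurentSupport (fun i => polyMulCoeff P c i) := by
  obtain ⟨i₀, h⟩ := hc
  refine ⟨i₀ - P.natDegree, fun i hi => ?_⟩
  exact pmc_order_vanish (m := i₀) (fun j hj => h j hj) hi

lemma ils_pcz (p : Polynomial ℚ) : IsLaurentSupport (fun i => polyCoeffZinv p i) := by
  refine ⟨-(p.natDegree : ℤ), fun i hi => ?_⟩
  show (if i ≤ 0 then p.coeff (-i).toNat else 0) = 0
  rcases le_or_gt i 0 with h | h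
  · rw [if_pos h, p.coeff_eq_zero_of_natDegree_lt (by omega)]
  · rw [if_neg (by omega)]

lemma ils_sub {c1 c2 : ℤ → ℚ} (h1 : IsLaurentSupport c1) (h2 : IsLaurentSupport c2) :
    IsLaurentSupport (fun i => c1 i - c2 i) := by
  obtain ⟨a, ha⟩ := h1; obtain ⟨b, hb⟩ := h2
  exact ⟨min a b, fun i hi => by
    show c1 i - c2 i = 0
    rw [ha i (by omega), hb i (by omega), sub_zero]⟩

lemma order_unique {g : ℤ → ℚ} {m m' : ℤ} (h1 : ∀ i < m, g i = 0) (h1' : g m ≠ 0)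
    (h2 : ∀ i < m', g i = 0) (h2' : g m' ≠ 0) : m = m' := by
  rcases lt_trichotomy m m' with h | h | h
  · exact absurd (h2 m h) h1'
  · exact h
  · exact absurd (h1 m' h) h2'

lemma exists_order {g : ℤ → ℚ} (hbdd : IsLaurentSupport g) (hne : ∃ i, g i ≠ 0) :
    ∃ m : ℤ, (∀ i < m, g i = 0) ∧ g m ≠ 0 := by
  obtain ⟨i₀, h₀⟩ := hbdd
  obtain ⟨m, hm, hmin⟩ := Int.exists_least_of_bdd (P := fun z => g z ≠ 0)
    ⟨i₀, fun z hz => by by_contra h; exact hz (h₀ z (by omega))⟩ hne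
  exact ⟨m, fun i hi => by by_contra h; have := hmin i h; omega, hm⟩

lemma pcz_sub (p q : Polynomial ℚ) (i : ℤ) :
    polyCoeffZinv (p - q) i = polyCoeffZinv p i - polyCoeffZinv q i := by
  unfold polyCoeffZinv
  split <;> simp

lemma pcz_cross (c : ℤ → ℚ) (q p' q' p : Polynomial ℚ) (i : ℤ) :
    polyCoeffZinv (q * p' - q' * p) i
      = polyMulCoeff q' (fun j => polyMulCoeff q c j - polyCoeffZinv p j) i
        - polyMulCoeff q (fun j => polyMulCoeff q' c j - polyCoeffZinv p' j) i := by
  have h1 : polyMulCoeff q' (fun j => polyMulCoeff q c j) i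
      = polyMulCoeff q (fun j => polyMulCoeff q' c j) i := pmc_comm q' q c i
  rw [pcz_sub, pcz_mul, pcz_mul, pmc_sub_c, pmc_sub_c, h1]
  ring

/-- Cross lemma: no convergent degree strictly between `deg q` and the order `e`. -/
lemma cross {c : ℤ → ℚ} {p q : Polynomial ℚ} (hq : q ≠ 0) {e : ℤ}
    (hlow : ∀ i < e, polyMulCoeff q c i = polyCoeffZinv p i)
    {w : ℕ} (hw1 : q.natDegree < w) (hw2 : (w : ℤ) < e) : w ∉ convDegrees c := by
  rintro ⟨p', q', ⟨hcop', hq', hconv'⟩, hdegq'⟩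
  have herr1 : ∀ j < e, polyMulCoeff q c j - polyCoeffZinv p j = 0 :=
    fun j hj => sub_eq_zero.2 (hlow j hj)
  have herr2 : ∀ j < (w : ℤ) + 1, polyMulCoeff q' c j - polyCoeffZinv p' j = 0 := by
    intro j hj
    exact sub_eq_zero.2 (hconv' j (by omega))
  have hD : q * p' - q' * p = 0 := by
    apply Polynomial.ext
    intro n
    rw [coeff_zero]
    have hle : -(n : ℤ) ≤ 0 := by omega
    have : polyCoeffZinv (q * p' - q' * p) (-(n : ℤ)) = (q * p' - q' * p).coeff n := by
      unfold polyCoeffZinv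
      rw [if_pos hle]
      congr 1
      omega
    rw [← this, pcz_cross c q p' q' p]
    rw [pmc_order_vanish (m := e) herr1 (by omega),
        pmc_order_vanish (m := (w : ℤ) + 1) herr2 (by omega), sub_zero]
  have heq : q * p' = q' * p := by linear_combination hD
  have hdvd : q' ∣ q * p' := ⟨p, heq.symm ▸ rfl⟩
  have hdvd2 : q' ∣ q := (hcop'.symm).dvd_of_dvd_mul_right hdvd
  have := Polynomial.natDegree_le_of_dvd hdvd2 hq
  omega

/-- Pigeonhole: a nonzero polynomial `Q` of degree ≤ n whose product with `f` has no
terms `z^{-i}` for `1 ≤ i ≤ n`. -/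
lemma exists_small_Q (c : ℤ → ℚ) (n : ℕ) :
    ∃ Q : Polynomial ℚ, Q ≠ 0 ∧ Q.natDegree ≤ n ∧
      ∀ i : ℤ, 1 ≤ i → i ≤ n → polyMulCoeff Q c i = 0 := by
  classical
  let φ : (Fin (n+1) → ℚ) →ₗ[ℚ] (Fin n → ℚ) :=
    { toFun := fun x k => ∑ j : Fin (n+1), x j * c (((k : ℕ) : ℤ) + 1 + (j : ℕ))
      map_add' := by
        intro x y
        funext k
        simp only [Pi.add_apply]
        rw [← Finset.sum_add_distrib]
        exact Finset.sum_congr rfl fun j _ => by ring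
      map_smul' := by
        intro a x
        funext k
        simp only [Pi.smul_apply, smul_eq_mul, RingHom.id_apply]
        rw [Finset.mul_sum]
        exact Finset.sum_congr rfl fun j _ => by ring }
  have hni : ¬ Function.Injective φ := by
    intro hinj
    have := LinearMap.finrank_le_finrank_of_injective hinj
    rw [Module.finrank_fintype_fun_eq_card, Module.finrank_fintype_fun_eq_card] at this
    simp at this
  rw [Function.not_injective_iff] at hni
  obtain ⟨x, y, hxy, hne⟩ := hni
  set z := x - y with hz
  have hz0 : z ≠ 0 := sub_ne_zero.2 hne
  have hφz : φ z = 0 := by rw [map_sub, hxy, sub_self]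
  refine ⟨∑ j : Fin (n+1), monomial (j : ℕ) (z j), ?_, ?_, ?_⟩
  · intro h
    apply hz0
    funext j
    have := congrArg (fun P => Polynomial.coeff P (j : ℕ)) h
    simp only [Polynomial.finset_sum_coeff, coeff_monomial, coeff_zero] at this
    rw [Finset.sum_eq_single j] at this
    · simpa using this
    · intro b _ hb
      rw [if_neg (fun hh => hb (Fin.ext (by simpa using hh)))]
    · intro hj
      simp at hj
  · apply Polynomial.natDegree_sum_le_of_forall_le
    intro j _
    exact (Polynomial.natDegree_monomial_le _).trans (by omega)
  · intro i hi1 hin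
    have hQco : ∀ m : ℕ, (∑ j : Fin (n+1), monomial (j : ℕ) (z j)).coeff m
        = if h : m < n + 1 then z ⟨m, h⟩ else 0 := by
      intro m
      simp only [Polynomial.finset_sum_coeff, coeff_monomial]
      by_cases h : m < n + 1
      · rw [dif_pos h, Finset.sum_eq_single (⟨m, h⟩ : Fin (n+1))]
        · simp
        · intro b _ hb
          rw [if_neg (fun hh => hb (Fin.ext (by simpa using hh)))]
        · intro hj
          simp at hj
      · rw [dif_neg h]
        refine Finset.sum_eq_zero fun j _ => ?_
        rw [if_neg (by omega)]
    rw [pmc_eq_sum _ _ _ (N := n + 1)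
        (Nat.lt_succ_of_le (Polynomial.natDegree_sum_le_of_forall_le _ _ fun j _ =>
          (Polynomial.natDegree_monomial_le _).trans (by omega)))]
    have hk : ∃ k : Fin n, (k : ℤ) + 1 = i := by
      refine ⟨⟨(i - 1).toNat, by omega⟩, by simp; omega⟩
    obtain ⟨k, hk⟩ := hk
    have := congrFun hφz k
    simp only [Pi.zero_apply] at this
    rw [← this]
    show _ = ∑ j : Fin (n+1), z j * c (((k : ℕ) : ℤ) + 1 + (j : ℕ))
    rw [← Fin.sum_univ_eq_sum_range (f := fun j => (∑ j : Fin (n+1), monomial (j : ℕ) (z j)).coeff j * c (i + j))]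
    refine Finset.sum_congr rfl fun j _ => ?_
    rw [hQco, dif_pos j.isLt, ← hk]

/-- Existence of a convergent whose denominator degree is the order `e` of a previous
approximation. -/
lemma exists_convergent_of_order {c : ℤ → ℚ} (hc : IsLaurentSupport c)
    {p q : Polynomial ℚ} (hcop : IsCoprime p q) (hq : q ≠ 0) {e : ℤ}
    (hdeg : (q.natDegree : ℤ) < e)
    (hlow : ∀ i < e, polyMulCoeff q c i = polyCoeffZinv p i)
    (hne : polyMulCoeff q c e ≠ polyCoeffZinv p e) :
    ∃ P Q : Polynomial ℚ, IsConvergent c P Q ∧ (Q.natDegree : ℤ) = e := by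
  obtain ⟨i₀, hi₀⟩ := hc
  have he0 : 0 < e := lt_of_le_of_lt (by positivity) hdeg
  set n := e.toNat with hn
  have hne'' : (n : ℤ) = e := Int.toNat_of_nonneg he0.le
  obtain ⟨Q, hQ0, hQdeg, hQvan⟩ := exists_small_Q c n
  set K : ℕ := n + 1 + i₀.natAbs with hK
  have hvanish : ∀ k : ℕ, K ≤ k → polyMulCoeff Q c (-(k : ℤ)) = 0 := by
    intro k hk
    exact pmc_order_vanish (m := i₀) hi₀ (by omega)
  set P : Polynomial ℚ := ∑ k ∈ Finset.range K, monomial k (polyMulCoeff Q c (-(k : ℤ)))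
    with hP
  have hPco : ∀ m : ℕ, P.coeff m = polyMulCoeff Q c (-(m : ℤ)) := by
    intro m
    rw [hP]
    simp only [Polynomial.finset_sum_coeff, coeff_monomial]
    rw [Finset.sum_ite_eq' (Finset.range K) m (fun k => polyMulCoeff Q c (-(k : ℤ)))]
    by_cases h : m < K
    · rw [if_pos (Finset.mem_range.2 h)]
    · rw [if_neg (fun hh => h (Finset.mem_range.1 hh)), hvanish m (by omega)]
  have herr2 : ∀ i : ℤ, i ≤ e → polyMulCoeff Q c i = polyCoeffZinv P i := by
    intro i hi
    unfold polyCoeffZinv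
    rcases le_or_gt i 0 with h | h
    · rw [if_pos h, hPco]
      congr 1
      omega
    · rw [if_neg (by omega)]
      exact hQvan i (by omega) (by omega)
  have herr1low : ∀ j < e, polyMulCoeff q c j - polyCoeffZinv p j = 0 :=
    fun j hj => sub_eq_zero.2 (hlow j hj)
  have herr1e : polyMulCoeff q c e - polyCoeffZinv p e ≠ 0 := sub_ne_zero.2 hne
  have herr2low : ∀ j < e + 1, polyMulCoeff Q c j - polyCoeffZinv P j = 0 :=
    fun j hj => sub_eq_zero.2 (herr2 j (by omega))
  -- the degree of Q is exactly e
  have hQdeg' : (Q.natDegree : ℤ) = e := by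
    by_contra hQd
    have hQlt : (Q.natDegree : ℤ) < e := by
      have : (Q.natDegree : ℤ) ≤ n := by exact_mod_cast hQdeg
      omega
    have hD : q * P - Q * p = 0 := by
      apply Polynomial.ext
      intro m
      rw [coeff_zero]
      have hpc : polyCoeffZinv (q * P - Q * p) (-(m : ℤ)) = (q * P - Q * p).coeff m := by
        unfold polyCoeffZinv
        rw [if_pos (by omega)]
        congr 1
        omega
      rw [← hpc, pcz_cross c q P Q p,
        pmc_order_vanish (m := e) herr1low (by omega),
        pmc_order_vanish (m := e + 1) herr2low (by omega), sub_zero]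
    have heq : q * P = Q * p := by linear_combination hD
    have hdvd : q ∣ Q := by
      exact (hcop.symm).dvd_of_dvd_mul_right (⟨P, heq.symm⟩ : q ∣ Q * p)
    obtain ⟨h, hh⟩ := hdvd
    have hh0 : h ≠ 0 := by
      intro h0
      rw [h0, mul_zero] at hh
      exact hQ0 hh
    have hPh : P = h * p := by
      apply mul_left_cancel₀ hq
      rw [heq, hh]
      ring
    have herr2h : ∀ j : ℤ, polyMulCoeff Q c j - polyCoeffZinv P j
        = polyMulCoeff h (fun i => polyMulCoeff q c i - polyCoeffZinv p i) j := by
      intro j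
      rw [hh, hPh, mul_comm q h, pmc_mul, pcz_mul, ← pmc_sub_c]
    have hlead := pmc_order_lead (P := h) (g := fun i => polyMulCoeff q c i - polyCoeffZinv p i)
      (m := e) herr1low
    have hzero := herr2low (e - h.natDegree) (by omega)
    rw [herr2h] at hzero
    rw [hzero] at hlead
    exact (mul_ne_zero (Polynomial.leadingCoeff_ne_zero.2 hh0) herr1e) hlead.symm
  -- D is a nonzero constant, giving coprimality
  set D := q * P - Q * p with hDdef
  have hDco : ∀ m : ℕ, D.coeff m
      = polyMulCoeff Q (fun j => polyMulCoeff q c j - polyCoeffZinv p j) (-(m : ℤ))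
        - polyMulCoeff q (fun j => polyMulCoeff Q c j - polyCoeffZinv P j) (-(m : ℤ)) := by
    intro m
    have hpc : polyCoeffZinv D (-(m : ℤ)) = D.coeff m := by
      unfold polyCoeffZinv
      rw [if_pos (by omega)]
      congr 1
      omega
    rw [← hpc, hDdef, pcz_cross c q P Q p]
  have hDhigh : ∀ m : ℕ, 1 ≤ m → D.coeff m = 0 := by
    intro m hm
    rw [hDco,
      pmc_order_vanish (m := e) herr1low (by omega),
      pmc_order_vanish (m := e + 1) herr2low (by omega), sub_zero]
  have hD0 : D.coeff 0 ≠ 0 := by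
    rw [hDco]
    have h1 : polyMulCoeff q (fun j => polyMulCoeff Q c j - polyCoeffZinv P j) (-(0 : ℕ) : ℤ)
        = 0 := pmc_order_vanish (m := e + 1) herr2low (by omega)
    have h2 : (-(0 : ℕ) : ℤ) = e - Q.natDegree := by omega
    rw [h1, sub_zero, h2, pmc_order_lead herr1low]
    exact mul_ne_zero (Polynomial.leadingCoeff_ne_zero.2 hQ0) herr1e
  have hcopPQ : IsCoprime P Q := by
    refine ⟨Polynomial.C (D.coeff 0)⁻¹ * q, -(Polynomial.C (D.coeff 0)⁻¹ * p), ?_⟩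
    have hDC : D = Polynomial.C (D.coeff 0) := by
      apply Polynomial.ext
      intro m
      rcases Nat.eq_zero_or_pos m with h | h
      · rw [h, Polynomial.coeff_C_zero]
      · rw [hDhigh m (by omega), Polynomial.coeff_C, if_neg (by omega)]
    have : Polynomial.C (D.coeff 0)⁻¹ * q * P + -(Polynomial.C (D.coeff 0)⁻¹ * p) * Q
        = Polynomial.C (D.coeff 0)⁻¹ * D := by
      rw [hDdef]
      ring
    rw [this]
    nth_rewrite 2 [hDC]
    rw [← Polynomial.C_mul, inv_mul_cancel₀ hD0, Polynomial.C_1]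
  exact ⟨P, Q, ⟨hcopPQ, hQ0, fun i hi => herr2 i (by omega)⟩, hQdeg'⟩

lemma spc_sub (d : ℕ) (f g : ℤ → ℚ) (i : ℤ) :
    substPowCoeff d (fun k => f k - g k) i = substPowCoeff d f i - substPowCoeff d g i := by
  unfold substPowCoeff
  split <;> simp

end St9b


/-- **Lemma 5.** Let `[u,v]` be a big gap in `Φ(f)` (i.e. `v - u > (r_a + r_b)/(d-1)`) with gap's
convergent `p_u/q_u`. Then the reduced form of `A(z)·p_u(z^d)/(B(z)·q_u(z^d))` is again a
convergent of `f`, and its corresponding gap is `[d·u + r_b - r_c, d·v - r_a + r_c]`, where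
`r_c = deg gcd(A(z)p_u(z^d), B(z)q_u(z^d))`; in particular its size is strictly greater
than `v - u`. -/
theorem statement9
    (d : ℕ) (hd : 2 ≤ d)
    (A B : Polynomial ℚ) (hA : A ≠ 0) (hB : B ≠ 0) (hAB : IsCoprime A B)
    (c : ℤ → ℚ) (hc : IsLaurentSupport c)
    (hfeq : MahlerEq d A B c)
    (hnotrat : ¬ IsRationalFun c)
    (u v : ℕ) (hgap : GapIn c u v)
    (hbig : ((A.natDegree : ℝ) + (B.natDegree : ℝ)) / ((d : ℝ) - 1) < (v : ℝ) - (u : ℝ))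
    (pu qu : Polynomial ℚ) (hpu : IsConvergent c pu qu) (hdegu : qu.natDegree = u) :
    ∃ u' v' : ℕ,
      (u' : ℤ) = d * u + B.natDegree
          - ((EuclideanDomain.gcd (A * pu.comp (Polynomial.X ^ d))
               (B * qu.comp (Polynomial.X ^ d))).natDegree : ℤ) ∧
      (v' : ℤ) = d * v - A.natDegree
          + ((EuclideanDomain.gcd (A * pu.comp (Polynomial.X ^ d))
               (B * qu.comp (Polynomial.X ^ d))).natDegree : ℤ) ∧
      IsConvergent c
        ((A * pu.comp (Polynomial.X ^ d)) /
          EuclideanDomain.gcd (A * pu.comp (Polynomial.X ^ d)) (B * qu.comp (Polynomial.X ^ d)))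
        ((B * qu.comp (Polynomial.X ^ d)) /
          EuclideanDomain.gcd (A * pu.comp (Polynomial.X ^ d)) (B * qu.comp (Polynomial.X ^ d))) ∧
      GapIn c u' v' ∧
      (v : ℤ) - (u : ℤ) < (v' : ℤ) - (u' : ℤ) := by
  open St9 St9b in
  have hd1 : 0 < d := by omega
  obtain ⟨hcopu, hqu0, hconvu⟩ := hpu
  -- error series of p_u/q_u
  set err1 : ℤ → ℚ := fun j => polyMulCoeff qu c j - polyCoeffZinv pu j with herr1def
  have herr1bdd : IsLaurentSupport err1 := ils_sub (ils_pmc hc qu) (ils_pcz pu)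
  have herr1ne : ∃ i, err1 i ≠ 0 := by
    by_contra h
    push_neg at h
    exact hnotrat ⟨pu, qu, hqu0, fun i => sub_eq_zero.1 (h i)⟩
  obtain ⟨m, hmlow, hmne⟩ := exists_order herr1bdd herr1ne
  have huv0 : u < v := hgap.2.2.1
  have hmgtu : (qu.natDegree : ℤ) < m := by
    by_contra h
    push_neg at h
    exact hmne (sub_eq_zero.2 (hconvu m h))
  -- the exact order of the error of p_u/q_u is v
  have hmv : m = (v : ℤ) := by
    rcases lt_trichotomy m (v : ℤ) with h | h | h
    · exfalso
      obtain ⟨P1, Q1, hconv1, hdeg1⟩ := exists_convergent_of_order hc hcopu hqu0 hmgtu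
        (fun i hi => sub_eq_zero.1 (hmlow i hi)) (fun hh => hmne (sub_eq_zero.2 hh))
      exact hgap.2.2.2 Q1.natDegree (by omega) (by omega) ⟨P1, Q1, hconv1, rfl⟩
    · exact h
    · exfalso
      exact cross hqu0 (fun i hi => sub_eq_zero.1 (hmlow i hi)) (w := v)
        (by omega) (by omega) hgap.2.1
  subst hmv
  -- the Mahler transform
  set quD := qu.comp (X ^ d) with hquDdef
  set puD := pu.comp (X ^ d) with hpuDdef
  set Qh := B * quD with hQhdef
  set Ph := A * puD with hPhdef
  have hquD0 : quD ≠ 0 := by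
    rw [hquDdef]
    intro h
    rcases Polynomial.comp_eq_zero_iff.1 h with h1 | h1
    · exact hqu0 h1
    · have := h1.2
      have hdx : (X ^ d : Polynomial ℚ).natDegree = d := natDegree_X_pow d
      rw [this] at hdx
      rw [natDegree_C] at hdx
      omega
  have hQh0 : Qh ≠ 0 := mul_ne_zero hB hquD0
  -- key identity : error of (Ph, Qh) = A * (err1 ∘ z^d)
  have key : ∀ i : ℤ, polyMulCoeff Qh c i - polyCoeffZinv Ph i
      = polyMulCoeff A (fun j => substPowCoeff d err1 j) i := by
    intro i
    have h1 : polyMulCoeff Qh c i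
        = polyMulCoeff A (fun j => substPowCoeff d (fun k => polyMulCoeff qu c k) j) i := by
      rw [hQhdef, mul_comm B quD, pmc_mul]
      rw [pmc_congr quD (fun j => hfeq j) i]
      rw [pmc_comm quD A]
      exact pmc_congr A (fun j => pmc_comp_pow d hd1 qu c j) i
    have h2 : polyCoeffZinv Ph i
        = polyMulCoeff A (fun j => substPowCoeff d (fun k => polyCoeffZinv pu k) j) i := by
      rw [hPhdef, pcz_mul]
      exact pmc_congr A (fun j => pcz_comp_pow d hd1 pu j) i
    rw [h1, h2, ← pmc_sub_c]
    refine pmc_congr A (fun j => ?_) i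
    rw [← spc_sub]
  -- order of the transformed error
  have hsub_low : ∀ i < (d : ℤ) * v, substPowCoeff d err1 i = 0 :=
    fun i hi => spc_order_vanish d hd1 hmlow hi
  have hsub_lead : substPowCoeff d err1 ((d : ℤ) * v) = err1 v := spc_order_lead d hd1 err1 v
  have hhat_low : ∀ i < (d : ℤ) * v - A.natDegree,
      polyMulCoeff Qh c i - polyCoeffZinv Ph i = 0 := by
    intro i hi
    rw [key]
    exact pmc_order_vanish hsub_low hi
  have hhat_ne : polyMulCoeff Qh c ((d : ℤ) * v - A.natDegree) - polyCoeffZinv Ph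
      ((d : ℤ) * v - A.natDegree) ≠ 0 := by
    rw [key, pmc_order_lead hsub_low, hsub_lead]
    exact mul_ne_zero (Polynomial.leadingCoeff_ne_zero.2 hA) hmne
  -- divide by the gcd
  set C0 := EuclideanDomain.gcd Ph Qh with hC0def
  have hC00 : C0 ≠ 0 := by
    rw [hC0def]
    intro h
    exact hQh0 (EuclideanDomain.gcd_eq_zero_iff.1 h).2
  set P := Ph / C0 with hPdef
  set Q := Qh / C0 with hQdef
  have hCP : C0 * P = Ph := EuclideanDomain.mul_div_cancel' hC00 (EuclideanDomain.gcd_dvd_left _ _)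
  have hCQ : C0 * Q = Qh := EuclideanDomain.mul_div_cancel' hC00 (EuclideanDomain.gcd_dvd_right _ _)
  have hQ0 : Q ≠ 0 := by
    intro h
    rw [h, mul_zero] at hCQ
    exact hQh0 hCQ.symm
  have hcopPQ : IsCoprime P Q := by
    rw [← EuclideanDomain.gcd_isUnit_iff]
    have hdvd : C0 * EuclideanDomain.gcd P Q ∣ C0 := by
      refine EuclideanDomain.dvd_gcd ?_ ?_
      · rw [← hCP]
        exact mul_dvd_mul_left C0 (EuclideanDomain.gcd_dvd_left _ _)
      · rw [← hCQ]
        exact mul_dvd_mul_left C0 (EuclideanDomain.gcd_dvd_right _ _)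
    have : EuclideanDomain.gcd P Q ∣ 1 := by
      have h2 : C0 * EuclideanDomain.gcd P Q ∣ C0 * 1 := by rwa [mul_one]
      exact (mul_dvd_mul_iff_left hC00).1 h2
    exact isUnit_of_dvd_one this
  -- error of (P, Q)
  set err2 : ℤ → ℚ := fun j => polyMulCoeff Q c j - polyCoeffZinv P j with herr2def
  have herr2bdd : IsLaurentSupport err2 := ils_sub (ils_pmc hc Q) (ils_pcz P)
  have hCerr : ∀ i : ℤ, polyMulCoeff C0 (fun j => err2 j) i
      = polyMulCoeff Qh c i - polyCoeffZinv Ph i := by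
    intro i
    rw [herr2def]
    rw [pmc_sub_c, ← pmc_mul, ← pcz_mul, hCP, hCQ]
  have herr2ne : ∃ i, err2 i ≠ 0 := by
    by_contra h
    push_neg at h
    apply hhat_ne
    rw [← hCerr]
    refine Finset.sum_eq_zero fun j _ => ?_
    simp [h]
  obtain ⟨m2, hm2low, hm2ne⟩ := exists_order herr2bdd herr2ne
  have hm2val : m2 = (d : ℤ) * v - A.natDegree + C0.natDegree := by
    have h1 : ∀ i < m2 - C0.natDegree, polyMulCoeff C0 (fun j => err2 j) i = 0 :=
      fun i hi => pmc_order_vanish hm2low hi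
    have h2 : polyMulCoeff C0 (fun j => err2 j) (m2 - C0.natDegree) ≠ 0 := by
      rw [pmc_order_lead hm2low]
      exact mul_ne_zero (Polynomial.leadingCoeff_ne_zero.2 hC00) hm2ne
    have := order_unique (g := fun i => polyMulCoeff C0 (fun j => err2 j) i) h1 h2
      (fun i hi => by
        show polyMulCoeff C0 (fun j => err2 j) i = 0
        rw [hCerr]; exact hhat_low i hi)
      (by
        show polyMulCoeff C0 (fun j => err2 j) _ ≠ 0
        rw [hCerr]; exact hhat_ne)
    omega
  -- degrees
  have hdegQh : Qh.natDegree = B.natDegree + qu.natDegree * d := by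
    rw [hQhdef, Polynomial.natDegree_mul hB hquD0, hquDdef, natDegree_comp, natDegree_X_pow]
  have hdegsplit : C0.natDegree + Q.natDegree = Qh.natDegree := by
    rw [← hCQ, Polynomial.natDegree_mul hC00 hQ0]
  -- integer arithmetic from the big gap hypothesis
  have hZbig : (A.natDegree : ℤ) + B.natDegree < ((d : ℤ) - 1) * ((v : ℤ) - u) := by
    have hd1R : (0 : ℝ) < (d : ℝ) - 1 := by
      have : (2 : ℝ) ≤ d := by exact_mod_cast hd
      linarith
    have := (div_lt_iff₀ hd1R).1 hbig
    have h2 : ((A.natDegree : ℝ) + B.natDegree) < ((d : ℝ) - 1) * ((v : ℝ) - u) := by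
      nlinarith [this]
    exact_mod_cast h2
  have huv : (u : ℤ) < v := by exact_mod_cast hgap.2.2.1
  have hdegQZ : (Q.natDegree : ℤ) = (d : ℤ) * u + B.natDegree - C0.natDegree := by
    have h1 : (C0.natDegree : ℤ) + Q.natDegree = B.natDegree + u * d := by
      exact_mod_cast hdegsplit.trans (by rw [hdegQh, hdegu])
    linarith [h1]
  have hineq : (Q.natDegree : ℤ) + ((v : ℤ) - u) < m2 := by
    have hrc : (0 : ℤ) ≤ C0.natDegree := by positivity
    have hexp : (d : ℤ) * ((v : ℤ) - u) = ((d : ℤ) - 1) * ((v : ℤ) - u) + ((v : ℤ) - u) := by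
      ring
    rw [hdegQZ, hm2val]
    nlinarith [hZbig, hrc, huv]
  have hm2pos : 0 < m2 := by
    have : (0 : ℤ) ≤ Q.natDegree := by positivity
    omega
  -- the new gap
  refine ⟨Q.natDegree, m2.toNat, ?_, ?_, ?_, ?_, ?_⟩
  · rw [hdegQZ]
  · rw [Int.toNat_of_nonneg hm2pos.le, hm2val]
  · exact ⟨hcopPQ, hQ0, fun i hi => sub_eq_zero.1 (hm2low i (by omega))⟩
  · refine ⟨⟨P, Q, ⟨hcopPQ, hQ0, fun i hi => sub_eq_zero.1 (hm2low i (by omega))⟩, rfl⟩,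
      ?_, by omega, ?_⟩
    · obtain ⟨P2, Q2, hconv2, hdeg2⟩ := exists_convergent_of_order hc hcopPQ hQ0
        (by omega : (Q.natDegree : ℤ) < m2)
        (fun i hi => sub_eq_zero.1 (hm2low i hi)) (fun hh => hm2ne (sub_eq_zero.2 hh))
      exact ⟨P2, Q2, hconv2, by omega⟩
    · intro w hw1 hw2
      exact cross hQ0 (fun i hi => sub_eq_zero.1 (hm2low i hi)) hw1 (by omega)
  · omega
end

section
/- Let d ≥ 2 be an integer, A, B ∈ ℚ[X] nonzero coprime polynomials of degrees r_a, r_b, and let f ∈ ℚ((z^{−1})) be a non-rational formal Laurent series satisfying B(z)f(z) = A(z)f(z^d). Let [u,v] = [u₀,v₀] be a big gap in Φ(f) with (d − 1)·u > r_a, generating the chain of big gaps [u₀,v₀] ≺ [u₁,v₁] ≺ [u₂,v₂] ≺ ⋯ . Then (v − r_a/(d−1))/(u + r_b/(d−1)) ≤ limsup_{n→∞} v_n/u_n ≤ (v + r_b/(d−1))/(u − r_a/(d−1)). -/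
open Polynomial Filter

lemma gcd_natDegree_le_aux (A B P Q : Polynomial ℚ) (hA : A ≠ 0) (hB : B ≠ 0) (hQ : Q ≠ 0)
    (hAB : IsCoprime A B) (hPQ : IsCoprime P Q) :
    (EuclideanDomain.gcd (A * P) (B * Q)).natDegree ≤ A.natDegree + B.natDegree := by
  set g := EuclideanDomain.gcd (A * P) (B * Q) with hgdef
  have hgd1 : g ∣ A * P := EuclideanDomain.gcd_dvd_left _ _
  have hgd2 : g ∣ B * Q := EuclideanDomain.gcd_dvd_right _ _
  obtain ⟨g1, g2, h1, h2, hgeq⟩ := exists_dvd_and_dvd_of_dvd_mul hgd1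
  have hg1g : g1 ∣ g := ⟨g2, hgeq⟩
  have hg2g : g2 ∣ g := ⟨g1, by rw [hgeq, mul_comm]⟩
  have cop1 : IsCoprime g1 B := hAB.of_isCoprime_of_dvd_left h1
  have hg1Q : g1 ∣ Q := cop1.dvd_of_dvd_mul_left (hg1g.trans hgd2)
  have cop2 : IsCoprime g2 Q := hPQ.of_isCoprime_of_dvd_left h2
  have hg2B : g2 ∣ B := cop2.dvd_of_dvd_mul_right (hg2g.trans hgd2)
  have hgne : g ≠ 0 := by
    intro h
    rw [hgdef, EuclideanDomain.gcd_eq_zero_iff] at h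
    exact (mul_ne_zero hB hQ) h.2
  have hg1ne : g1 ≠ 0 := by rintro rfl; rw [zero_mul] at hgeq; exact hgne hgeq
  have hg2ne : g2 ≠ 0 := by rintro rfl; rw [mul_zero] at hgeq; exact hgne hgeq
  calc g.natDegree = g1.natDegree + g2.natDegree := by
        rw [hgeq]; exact Polynomial.natDegree_mul hg1ne hg2ne
    _ ≤ A.natDegree + B.natDegree :=
        add_le_add (Polynomial.natDegree_le_of_dvd h1 hA)
          (Polynomial.natDegree_le_of_dvd hg2B hB)

set_option maxHeartbeats 1000000 in
/-- **Lemma 7.** Let `[u₀,v₀]` be a big gap in `Φ(f)` with `(d-1)·u₀ > r_a`, generating the chain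
of big gaps `[u₀,v₀] ≺ [u₁,v₁] ≺ ⋯`, where `p_{u_{n+1}}/q_{u_{n+1}}` is the reduced form of
`A(z)·p_{u_n}(z^d)/(B(z)·q_{u_n}(z^d))`, so that `u_{n+1} = d·u_n + r_b - r_{c,n}` and
`v_{n+1} = d·v_n - r_a + r_{c,n}` with `r_{c,n} = deg gcd(A(z)p_{u_n}(z^d), B(z)q_{u_n}(z^d))`.
Then `(v₀ - r_a/(d-1))/(u₀ + r_b/(d-1)) ≤ limsup_n v_n/u_n ≤ (v₀ + r_b/(d-1))/(u₀ - r_a/(d-1))`. -/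
theorem statement11
    (d : ℕ) (hd : 2 ≤ d)
    (A B : Polynomial ℚ) (hA : A ≠ 0) (hB : B ≠ 0) (hAB : IsCoprime A B)
    (c : ℤ → ℚ) (hc : IsLaurentSupport c)
    (hfeq : MahlerEq d A B c)
    (hnotrat : ¬ IsRationalFun c)
    (p q : ℕ → Polynomial ℚ) (u v : ℕ → ℕ)
    (hconv : ∀ n, IsConvergent c (p n) (q n))
    (hdeg : ∀ n, (q n).natDegree = u n)
    (hgap : ∀ n, GapIn c (u n) (v n))
    (hbig : ((A.natDegree : ℝ) + (B.natDegree : ℝ)) / ((d : ℝ) - 1)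
              < (v 0 : ℝ) - (u 0 : ℝ))
    (hu0 : (A.natDegree : ℝ) < ((d : ℝ) - 1) * (u 0 : ℝ))
    (hchain : ∀ n, p (n + 1) * (B * (q n).comp (Polynomial.X ^ d))
                 = q (n + 1) * (A * (p n).comp (Polynomial.X ^ d)))
    (hurec : ∀ n, (u (n + 1) : ℤ) = d * u n + B.natDegree
        - ((EuclideanDomain.gcd (A * (p n).comp (Polynomial.X ^ d))
             (B * (q n).comp (Polynomial.X ^ d))).natDegree : ℤ))
    (hvrec : ∀ n, (v (n + 1) : ℤ) = d * v n - A.natDegree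
        + ((EuclideanDomain.gcd (A * (p n).comp (Polynomial.X ^ d))
             (B * (q n).comp (Polynomial.X ^ d))).natDegree : ℤ)) :
    ((v 0 : ℝ) - (A.natDegree : ℝ) / ((d : ℝ) - 1))
        / ((u 0 : ℝ) + (B.natDegree : ℝ) / ((d : ℝ) - 1))
      ≤ Filter.limsup (fun n => (v n : ℝ) / (u n : ℝ)) Filter.atTop
    ∧ Filter.limsup (fun n => (v n : ℝ) / (u n : ℝ)) Filter.atTop
      ≤ ((v 0 : ℝ) + (B.natDegree : ℝ) / ((d : ℝ) - 1))
        / ((u 0 : ℝ) - (A.natDegree : ℝ) / ((d : ℝ) - 1)) := by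
  clear hc hfeq hnotrat hbig
  set ra : ℝ := (A.natDegree : ℝ) with hra_def
  set rb : ℝ := (B.natDegree : ℝ) with hrb_def
  set e : ℝ := (d : ℝ) - 1 with he_def
  have hd2 : (2 : ℝ) ≤ (d : ℝ) := by exact_mod_cast hd
  have he : 0 < e := by rw [he_def]; linarith
  have hd0 : (0 : ℝ) < (d : ℝ) := by linarith
  set r : ℕ → ℝ := fun n => ((EuclideanDomain.gcd (A * (p n).comp (Polynomial.X ^ d))
    (B * (q n).comp (Polynomial.X ^ d))).natDegree : ℝ) with hr_def
  have hr0 : ∀ n, 0 ≤ r n := fun n => Nat.cast_nonneg _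
  have hrab : ∀ n, r n ≤ ra + rb := by
    intro n
    have hq0 : q n ≠ 0 := (hconv n).2.1
    have hq' : (q n).comp (Polynomial.X ^ d) ≠ 0 := by
      intro h
      rcases Polynomial.comp_eq_zero_iff.mp h with h | ⟨_, h2⟩
      · exact hq0 h
      · have h3 := congrArg Polynomial.natDegree h2
        rw [Polynomial.natDegree_X_pow, Polynomial.natDegree_C] at h3
        omega
    have hpq : IsCoprime ((p n).comp (Polynomial.X ^ d)) ((q n).comp (Polynomial.X ^ d)) := by
      obtain ⟨a, b, hab⟩ := (hconv n).1
      refine ⟨a.comp (Polynomial.X ^ d), b.comp (Polynomial.X ^ d), ?_⟩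
      have h := congrArg (fun f : Polynomial ℚ => f.comp (Polynomial.X ^ d)) hab
      simpa [Polynomial.add_comp, Polynomial.mul_comp] using h
    have hle := gcd_natDegree_le_aux A B _ _ hA hB hq' hAB hpq
    have hle' : r n ≤ ((A.natDegree + B.natDegree : ℕ) : ℝ) := by
      simp only [hr_def]; exact_mod_cast hle
    rw [hra_def, hrb_def]; push_cast at hle'; linarith
  have hur : ∀ n, (u (n + 1) : ℝ) = (d : ℝ) * u n + rb - r n := by
    intro n
    have h := congrArg (fun z : ℤ => (z : ℝ)) (hurec n)
    push_cast at h
    simp only [hr_def, hrb_def]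
    linarith [h]
  have hvr : ∀ n, (v (n + 1) : ℝ) = (d : ℝ) * v n - ra + r n := by
    intro n
    have h := congrArg (fun z : ℤ => (z : ℝ)) (hvrec n)
    push_cast at h
    simp only [hr_def, hra_def]
    linarith [h]
  have hee : e * (ra / e) = ra := mul_div_cancel₀ _ (ne_of_gt he)
  have hee' : e * (rb / e) = rb := mul_div_cancel₀ _ (ne_of_gt he)
  have hrae : 0 ≤ ra / e := div_nonneg (by rw [hra_def]; positivity) he.le
  have hrbe : 0 ≤ rb / e := div_nonneg (by rw [hrb_def]; positivity) he.le
  -- four growth estimates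
  have hW : ∀ n, (d : ℝ) ^ n * ((u 0 : ℝ) - ra / e) ≤ (u n : ℝ) - ra / e := by
    intro n
    induction n with
    | zero => simp
    | succ n ih =>
      have hmul := mul_le_mul_of_nonneg_left ih hd0.le
      rw [pow_succ, hur n]
      nlinarith [hrab n, hr0 n, hee, he_def]
  have hU : ∀ n, (u n : ℝ) + rb / e ≤ (d : ℝ) ^ n * ((u 0 : ℝ) + rb / e) := by
    intro n
    induction n with
    | zero => simp
    | succ n ih =>
      have hmul := mul_le_mul_of_nonneg_left ih hd0.le
      rw [pow_succ, hur n]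
      nlinarith [hrab n, hr0 n, hee', he_def]
  have hV : ∀ n, (d : ℝ) ^ n * ((v 0 : ℝ) - ra / e) ≤ (v n : ℝ) - ra / e := by
    intro n
    induction n with
    | zero => simp
    | succ n ih =>
      have hmul := mul_le_mul_of_nonneg_left ih hd0.le
      rw [pow_succ, hvr n]
      nlinarith [hrab n, hr0 n, hee, he_def]
  have hV' : ∀ n, (v n : ℝ) + rb / e ≤ (d : ℝ) ^ n * ((v 0 : ℝ) + rb / e) := by
    intro n
    induction n with
    | zero => simp
    | succ n ih =>
      have hmul := mul_le_mul_of_nonneg_left ih hd0.le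
      rw [pow_succ, hvr n]
      nlinarith [hrab n, hr0 n, hee, hee', he_def]
  -- positivity facts
  have hW0 : 0 < (u 0 : ℝ) - ra / e := by
    have : ra / e < (u 0 : ℝ) := (div_lt_iff₀ he).mpr (by rw [he_def] at hu0 ⊢; linarith)
    linarith
  have huv0 : (u 0 : ℝ) < (v 0 : ℝ) := by exact_mod_cast (hgap 0).2.2.1
  have hV0 : 0 < (v 0 : ℝ) - ra / e := by linarith
  have hU0 : 0 < (u 0 : ℝ) + rb / e := by linarith
  have hV0' : 0 < (v 0 : ℝ) + rb / e := by linarith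
  have hdpow : ∀ n, (1 : ℝ) ≤ (d : ℝ) ^ n := fun n => one_le_pow₀ (by linarith)
  have hupos : ∀ n, 0 < (u n : ℝ) := by
    intro n
    have h1 := hW n
    have h3 := mul_le_mul_of_nonneg_right (hdpow n) hW0.le
    linarith [hrae]
  -- pointwise bounds on the ratio
  have hlow : ∀ n, ((v 0 : ℝ) - ra / e) / ((u 0 : ℝ) + rb / e) ≤ (v n : ℝ) / (u n : ℝ) := by
    intro n
    rw [div_le_div_iff₀ hU0 (hupos n)]
    calc ((v 0 : ℝ) - ra / e) * (u n : ℝ)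
        ≤ ((v 0 : ℝ) - ra / e) * ((u n : ℝ) + rb / e) := by nlinarith [hrbe, hV0]
      _ ≤ ((v 0 : ℝ) - ra / e) * ((d : ℝ) ^ n * ((u 0 : ℝ) + rb / e)) :=
          mul_le_mul_of_nonneg_left (hU n) hV0.le
      _ = ((d : ℝ) ^ n * ((v 0 : ℝ) - ra / e)) * ((u 0 : ℝ) + rb / e) := by ring
      _ ≤ ((v n : ℝ) - ra / e) * ((u 0 : ℝ) + rb / e) :=
          mul_le_mul_of_nonneg_right (hV n) hU0.le
      _ ≤ (v n : ℝ) * ((u 0 : ℝ) + rb / e) := by nlinarith [hrae, hU0]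
  have hhigh : ∀ n, (v n : ℝ) / (u n : ℝ) ≤ ((v 0 : ℝ) + rb / e) / ((u 0 : ℝ) - ra / e) := by
    intro n
    rw [div_le_div_iff₀ (hupos n) hW0]
    have hv_le : (v n : ℝ) ≤ (d : ℝ) ^ n * ((v 0 : ℝ) + rb / e) := by
      have := hV' n; linarith
    have hu_ge : (d : ℝ) ^ n * ((u 0 : ℝ) - ra / e) ≤ (u n : ℝ) := by
      have := hW n; linarith
    calc (v n : ℝ) * ((u 0 : ℝ) - ra / e)
        ≤ ((d : ℝ) ^ n * ((v 0 : ℝ) + rb / e)) * ((u 0 : ℝ) - ra / e) :=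
          mul_le_mul_of_nonneg_right hv_le hW0.le
      _ = ((v 0 : ℝ) + rb / e) * ((d : ℝ) ^ n * ((u 0 : ℝ) - ra / e)) := by ring
      _ ≤ ((v 0 : ℝ) + rb / e) * (u n : ℝ) := mul_le_mul_of_nonneg_left hu_ge hV0'.le
  constructor
  · exact le_limsup_of_frequently_le (Filter.Frequently.of_forall hlow)
      (isBoundedUnder_of ⟨_, hhigh⟩)
  · exact limsup_le_of_le (isCoboundedUnder_le_of_le atTop hlow)
      (Filter.Eventually.of_forall hhigh)
end
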